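/- arXiv:1306.1845 — 11 statements merged into one kernel-verified Lean document; each statement's English description precedes it below -/
import Mathlib

section
/- If f, g : U → V are linear maps between vector spaces over a field K such that for every x ∈ U the vectors f(x) and g(x) are linearly dependent, and g is not identically zero with rank at least 2, then f is a scalar multiple of g. -/
/-!
Where `g x ≠ 0`, local dependence gives `f x = c • g x` for some `c` depending on `x`.
Comparing `x`, `y` and `x + y` shows that the factor is the same for `x` and `y` whenever `g x`
and `g y` are independent. The same comparison with `x ∈ ker g` puts `f x` on two independent
lines `K ∙ g u` and `K ∙ g z`, which exist because `g` has rank at least 2, so `f` vanishes on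
`ker g`. Finally, if `g x = t • g u` then `x - t • u ∈ ker g`, whence `f x = t • f u`.
-/

open Submodule

section

variable {K U V : Type*} [Field K] [AddCommGroup U] [Module K U] [AddCommGroup V] [Module K V]

theorem Submodule.mem_span_singleton_of_dependent {v w : V}
    (hdep : ∃ a b : K, (a, b) ≠ 0 ∧ a • v + b • w = 0) (hw : w ≠ 0) : v ∈ K ∙ w := by
  obtain ⟨a, b, hab, h⟩ := hdep
  have hdep' : ¬ LinearIndependent K ![w, v] := fun hind => by
    obtain ⟨hb, ha⟩ := LinearIndependent.pair_iff.mp hind b a (by rwa [add_comm])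
    exact hab (Prod.ext ha hb)
  simpa [LinearIndependent.pair_iff' hw, mem_span_singleton] using hdep'

namespace LinearMap

theorem exists_linearIndependent_pair_apply {g : U →ₗ[K] V} (hrank : 1 < g.rank) :
    ∃ u z, LinearIndependent K ![g u, g z] := by
  obtain ⟨⟨_, u, rfl⟩, hu⟩ := rank_pos_iff_exists_ne_zero.mp (zero_lt_one.trans hrank)
  obtain ⟨⟨_, z, rfl⟩, huz⟩ := exists_linearIndependent_pair_of_one_lt_rank hrank hu
  exact ⟨u, z, LinearIndependent.pair_iff.mpr fun s t hst =>
    LinearIndependent.pair_iff.mp huz s t (Subtype.ext (by simpa using hst))⟩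

variable {f g : U →ₗ[K] V}

theorem eq_smul_of_linearIndependent_pair (hfg : ∀ x, g x ≠ 0 → f x ∈ K ∙ g x) {x y : U}
    (hind : LinearIndependent K ![g x, g y]) {c : K} (hx : f x = c • g x) :
    f y = c • g y := by
  have hxy : g (x + y) ≠ 0 := fun h =>
    one_ne_zero (LinearIndependent.pair_iff.mp hind 1 1 (by simpa using h)).1
  obtain ⟨b, hb⟩ := mem_span_singleton.mp (hfg y (hind.ne_zero 1))
  obtain ⟨d, hd⟩ := mem_span_singleton.mp (hfg (x + y) hxy)
  rw [map_add, map_add, hx, ← hb, smul_add] at hd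
  obtain ⟨hc, hb'⟩ := LinearIndependent.pair_iff.mp hind (c - d) (b - d) (by
    rw [sub_smul, sub_smul]
    linear_combination (norm := module) -hd)
  rw [← hb, sub_eq_zero.mp hb', ← sub_eq_zero.mp hc]

theorem apply_mem_span_singleton_of_apply_eq_zero (hfg : ∀ x, g x ≠ 0 → f x ∈ K ∙ g x)
    {x w : U} (hx : g x = 0) (hw : g w ≠ 0) : f x ∈ K ∙ g w := by
  have hxw : f x + f w ∈ K ∙ g w := by simpa [hx] using hfg (x + w) (by simpa [hx])
  exact (add_mem_cancel_right (hfg w hw)).mp hxw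

theorem apply_eq_zero_of_apply_eq_zero (hfg : ∀ x, g x ≠ 0 → f x ∈ K ∙ g x) {u z : U}
    (hind : LinearIndependent K ![g u, g z]) {x : U} (hx : g x = 0) : f x = 0 := by
  obtain ⟨s, hs⟩ :=
    mem_span_singleton.mp (apply_mem_span_singleton_of_apply_eq_zero hfg hx (hind.ne_zero 0))
  obtain ⟨t, ht⟩ :=
    mem_span_singleton.mp (apply_mem_span_singleton_of_apply_eq_zero hfg hx (hind.ne_zero 1))
  have hs0 :=
    (LinearIndependent.pair_iff.mp hind s (-t) (by rw [neg_smul, hs, ht, add_neg_cancel])).1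
  rw [← hs, hs0, zero_smul]

theorem apply_eq_smul_of_apply_eq_smul (hker : ∀ x, g x = 0 → f x = 0) {u x : U} {c t : K}
    (hu : f u = c • g u) (hx : g x = t • g u) : f x = c • g x := by
  have hker' := hker (x - t • u) (by rw [map_sub, map_smul, hx, sub_self])
  rw [map_sub, map_smul, sub_eq_zero] at hker'
  rw [hker', hu, hx, smul_comm]

end LinearMap

end

open LinearMap Submodule in
theorem stmt0_general {K U V : Type*} [Field K] [AddCommGroup U] [Module K U]
    [AddCommGroup V] [Module K V] (f g : U →ₗ[K] V)
    (hdep : ∀ x : U, ∃ a b : K, (a, b) ≠ 0 ∧ a • f x + b • g x = 0)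
    (hrank : 2 ≤ LinearMap.rank g) :
    ∃ c : K, f = c • g := by
  have hfg : ∀ x, g x ≠ 0 → f x ∈ K ∙ g x := fun x => mem_span_singleton_of_dependent (hdep x)
  obtain ⟨u, z, huz⟩ := exists_linearIndependent_pair_apply (Cardinal.one_lt_two.trans_le hrank)
  have hu : g u ≠ 0 := huz.ne_zero 0
  obtain ⟨c, hc⟩ := mem_span_singleton.mp (hfg u hu)
  refine ⟨c, LinearMap.ext fun x => ?_⟩
  by_cases hux : LinearIndependent K ![g u, g x]
  · exact eq_smul_of_linearIndependent_pair hfg hux hc.symm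
  · obtain ⟨t, ht⟩ : ∃ t : K, t • g u = g x := by
      simpa [LinearIndependent.pair_iff' hu] using hux
    exact apply_eq_smul_of_apply_eq_smul
      (fun _ => apply_eq_zero_of_apply_eq_zero hfg huz) hc.symm ht.symm

theorem stmt0 {K U V : Type*} [Field K] [AddCommGroup U] [Module K U]
    [AddCommGroup V] [Module K V] (f g : U →ₗ[K] V)
    (hdep : ∀ x : U, ∃ a b : K, (a, b) ≠ 0 ∧ a • f x + b • g x = 0)
    (hg : g ≠ 0) (hrank : 2 ≤ LinearMap.rank g) :
    ∃ c : K, f = c • g :=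
  stmt0_general f g hdep hrank
end

section
/- Let S be a 2-dimensional subspace of L(U,V) such that for every x ∈ U there exists a nonzero f ∈ S with f(x) = 0. Then there exists a 1-dimensional subspace D of V such that f(x) ∈ D for every f ∈ S and every x ∈ U. -/
/-!
Let `f, g` be a basis of `S`; local linear dependence says that `f x` and `g x` are linearly
dependent for every `x`. If `f x, f y` were independent, then wherever `f z ≠ 0` we could write
`g z = c_z • f z`, and comparing `x`, `y` and `x + y` shows the scalar `c_z` is a single constant
`c`, so that `g = c • f`, contradicting the independence of `f` and `g`. Hence `f`, and likewise
`g`, has rank one. Their two image lines coincide: otherwise evaluating at `x₀ + y₀`, where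
`f x₀ ≠ 0` and `g y₀ ≠ 0`, produces two independent values.
-/

open Module

theorem Submodule.exists_linearIndependent_pair_span_eq_of_finrank_eq_two
    {K M : Type*} [Field K] [AddCommGroup M] [Module K M] {S : Submodule K M}
    (h : finrank K S = 2) :
    ∃ f g : M, LinearIndependent K ![f, g] ∧ span K {f, g} = S := by
  have : FiniteDimensional K S := .of_finrank_eq_succ h
  let b := finBasisOfFinrankEq K S h
  have hb : S.subtype ∘ b = ![(b 0 : M), b 1] := by
    funext i; fin_cases i <;> rfl
  refine ⟨b 0, b 1, hb ▸ b.linearIndependent.map' S.subtype S.ker_subtype, ?_⟩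
  rw [← Matrix.range_cons_cons_empty, ← hb, Set.range_comp, span_image, b.span_eq,
    map_subtype_top]

theorem LinearIndependent.eq_zero_or_eq_zero_of_not_smul_pair
    {K V : Type*} [Field K] [AddCommGroup V] [Module K V] {v w : V} {a b : K}
    (h : LinearIndependent K ![v, w]) (h' : ¬ LinearIndependent K ![a • v, b • w]) :
    a = 0 ∨ b = 0 := by
  by_contra! hab
  exact h' ((pair_smul_smul_iff hab.1.isUnit hab.2.isUnit).mpr h)

namespace LinearMap

variable {K U V : Type*} [Field K] [AddCommGroup U] [Module K U] [AddCommGroup V] [Module K V]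

/-- For linearly independent `f, g`, this says that `span K {f, g}` is locally linearly
dependent. -/
def LocallyDependent (f g : U →ₗ[K] V) : Prop :=
  ∀ x, ¬ LinearIndependent K ![f x, g x]

variable {f g : U →ₗ[K] V}

theorem LocallyDependent.symm (hdep : LocallyDependent f g) : LocallyDependent g f :=
  fun x ↦ LinearIndependent.pair_symm_iff.not.mp (hdep x)

theorem LocallyDependent.exists_smul_eq (hdep : LocallyDependent f g) {x : U} (hx : f x ≠ 0) :
    ∃ c : K, c • f x = g x := by
  simpa [LinearIndependent.pair_iff' hx] using hdep x

theorem locallyDependent_of_forall_exists_mem_span_pair {S : Submodule K (U →ₗ[K] V)}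
    (hS : Submodule.span K {f, g} = S) (hLLD : ∀ x : U, ∃ h ∈ S, h ≠ 0 ∧ h x = 0) :
    LocallyDependent f g := by
  intro x hind
  obtain ⟨h, hS', hne, hx⟩ := hLLD x
  obtain ⟨a, b, rfl⟩ := Submodule.mem_span_pair.mp (hS ▸ hS')
  obtain ⟨rfl, rfl⟩ := LinearIndependent.pair_iff.mp hind a b (by simpa using hx)
  simp at hne

theorem LocallyDependent.apply_eq_smul_of_linearIndependent (hdep : LocallyDependent f g)
    {p q : U} {c : K} (hpq : LinearIndependent K ![f p, f q]) (hp : g p = c • f p) :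
    g q = c • f q := by
  obtain ⟨d, hd⟩ := hdep.exists_smul_eq (by simpa using hpq.ne_zero 1)
  have hsum : LinearIndependent K ![f p, f (p + q)] := by
    rwa [map_add, LinearIndependent.pair_add_right_iff]
  obtain ⟨e, he⟩ := hdep.exists_smul_eq (x := p + q) (by simpa using hsum.ne_zero 1)
  rw [map_add, map_add, hp, ← hd, smul_add] at he
  obtain ⟨hce, hde⟩ := LinearIndependent.pair_iff.mp hpq (c - e) (d - e) (by
    rw [sub_smul, sub_smul, sub_add_sub_comm, he, sub_self])
  rw [← hd, sub_eq_zero.mp hde, ← sub_eq_zero.mp hce]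

theorem LocallyDependent.exists_eq_smul (hdep : LocallyDependent f g) {x y : U}
    (hxy : LinearIndependent K ![f x, f y]) : ∃ c : K, g = c • f := by
  have hx : f x ≠ 0 := by simpa using hxy.ne_zero 0
  obtain ⟨c, hc⟩ := hdep.exists_smul_eq hx
  have hy := hdep.apply_eq_smul_of_linearIndependent hxy hc.symm
  refine ⟨c, LinearMap.ext fun z ↦ ?_⟩
  by_cases hxz : LinearIndependent K ![f x, f z]
  · exact hdep.apply_eq_smul_of_linearIndependent hxz hc.symm
  · obtain ⟨t, ht⟩ : ∃ t : K, t • f x = f z := by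
      simpa [LinearIndependent.pair_iff' hx] using hxz
    have hxzy : LinearIndependent K ![f x, f (z + y)] := by
      rwa [map_add, ← ht, LinearIndependent.pair_add_smul_right_iff]
    have hzy := hdep.apply_eq_smul_of_linearIndependent hxzy hc.symm
    rw [map_add, map_add, hy, smul_add] at hzy
    simpa using add_right_cancel hzy

theorem LocallyDependent.apply_mem_span_singleton (hdep : LocallyDependent f g)
    (hfg : LinearIndependent K ![f, g]) {x₀ : U} (hx₀ : f x₀ ≠ 0) (x : U) :
    f x ∈ K ∙ f x₀ := by
  by_contra hx
  have hind : LinearIndependent K ![f x₀, f x] := by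
    rw [LinearIndependent.pair_iff' hx₀]
    exact fun a ha ↦ hx (Submodule.mem_span_singleton.mpr ⟨a, ha⟩)
  obtain ⟨c, rfl⟩ := hdep.exists_eq_smul hind
  exact (LinearIndependent.pair_iff' (by simpa using hfg.ne_zero 0)).mp hfg c rfl

theorem LocallyDependent.exists_apply_mem_span_singleton (hdep : LocallyDependent f g)
    (hfg : LinearIndependent K ![f, g]) :
    ∃ w : V, w ≠ 0 ∧ ∀ x, f x ∈ K ∙ w ∧ g x ∈ K ∙ w := by
  obtain ⟨x₀, hx₀⟩ := DFunLike.ne_iff.mp (by simpa using hfg.ne_zero 0 : f ≠ 0)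
  obtain ⟨y₀, hy₀⟩ := DFunLike.ne_iff.mp (by simpa using hfg.ne_zero 1 : g ≠ 0)
  have hf := hdep.apply_mem_span_singleton hfg hx₀
  have hg := hdep.symm.apply_mem_span_singleton (LinearIndependent.pair_symm_iff.mp hfg) hy₀
  suffices hgf : g y₀ ∈ K ∙ f x₀ from ⟨f x₀, hx₀, fun x ↦
    ⟨hf x, (Submodule.span_singleton_le_iff_mem _ _).mpr hgf (hg x)⟩⟩
  by_contra hgf
  have hind : LinearIndependent K ![f x₀, g y₀] := by
    rw [LinearIndependent.pair_iff' hx₀]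
    exact fun a ha ↦ hgf (Submodule.mem_span_singleton.mpr ⟨a, ha⟩)
  obtain ⟨s, hs⟩ := Submodule.mem_span_singleton.mp (hf y₀)
  obtain ⟨t, ht⟩ := Submodule.mem_span_singleton.mp (hg x₀)
  have ht0 : t = 0 := (hind.eq_zero_or_eq_zero_of_not_smul_pair (a := 1) (b := t)
    (by simpa [ht] using hdep x₀)).resolve_left one_ne_zero
  have hs0 : s = 0 := (hind.eq_zero_or_eq_zero_of_not_smul_pair (a := s) (b := 1)
    (by simpa [hs] using hdep y₀)).resolve_right one_ne_zero
  apply hdep (x₀ + y₀)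
  simpa [← hs, ← ht, hs0, ht0] using hind

end LinearMap

theorem stmt1 {K U V : Type*} [Field K] [AddCommGroup U] [Module K U]
    [AddCommGroup V] [Module K V] (S : Submodule K (U →ₗ[K] V))
    (hdim : Module.finrank K S = 2)
    (hLLD : ∀ x : U, ∃ f ∈ S, f ≠ 0 ∧ f x = 0) :
    ∃ D : Submodule K V, Module.finrank K D = 1 ∧
      ∀ f ∈ S, ∀ x : U, f x ∈ D := by
  obtain ⟨f, g, hfg, hS⟩ := S.exists_linearIndependent_pair_span_eq_of_finrank_eq_two hdim
  have hdep := LinearMap.locallyDependent_of_forall_exists_mem_span_pair hS hLLD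
  obtain ⟨w, hw, hfgw⟩ := hdep.exists_apply_mem_span_singleton hfg
  refine ⟨K ∙ w, finrank_span_singleton hw, fun h hh x ↦ ?_⟩
  obtain ⟨a, b, rfl⟩ := Submodule.mem_span_pair.mp (hS ▸ hh)
  simpa using add_mem (Submodule.smul_mem _ a (hfgw x).1) (Submodule.smul_mem _ b (hfgw x).2)
end

section
/- Let S be a linear subspace of m×n matrices over a field K with more than urk(S) elements, where urk(S) is the maximal rank of a matrix in S. If A₁,...,Aₛ span S and x₁,...,xₛ are indeterminates, then the rank of the matrix x₁A₁+⋯+xₛAₛ over the field K(x₁,...,xₛ) equals urk(S). -/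
/-!
Evaluating a minor of the semi-generic matrix `P = ∑ₜ Xₜ • Aₜ` at `c ∈ Kˢ` gives the same minor of
`∑ₜ cₜ • Aₜ ∈ S`. Hence a nonzero `r`-minor of a matrix of rank `r` in `S` yields a nonzero
`r`-minor of `P`. Conversely, every `(r+1)`-minor of `P` vanishes on all of `Kˢ`, and its degree
in each variable `Xᵢ` is at most `r`, since the coefficient of `Xᵢ ^ (r+1)` is the corresponding
minor of `Aᵢ`. As `|K| > r`, the combinatorial Nullstellensatz forces that minor to be zero.
-/

open Matrix MvPolynomial

section MinorRank

variable {K : Type*} [Field K] {m n : Type*} [Fintype n]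

theorem Matrix.le_rank_of_det_submatrix_ne_zero (M : Matrix m n K) {k : ℕ} {f : Fin k → m}
    {g : Fin k → n} (h : (M.submatrix f g).det ≠ 0) : k ≤ M.rank :=
  calc k = (M.submatrix f g).rank := by rw [rank_of_det_ne_zero h, Fintype.card_fin]
    _ ≤ M.rank := rank_submatrix_le M f g

theorem exists_linearIndependent_comp_of_le_finrank_span {V ι : Type*} [AddCommGroup V]
    [Module K V] [FiniteDimensional K V] (v : ι → V) {k : ℕ}
    (hk : k ≤ Module.finrank K (Submodule.span K (Set.range v))) :
    ∃ g : Fin k → ι, LinearIndependent K (v ∘ g) := by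
  obtain ⟨κ, a, -, hspan, hli⟩ := exists_linearIndependent' K v
  have := hli.finite
  have := Fintype.ofFinite κ
  rw [← hspan, finrank_span_eq_card hli, ← Fintype.card_fin k] at hk
  obtain ⟨e⟩ := Function.Embedding.nonempty_of_card_le hk
  exact ⟨a ∘ e, hli.comp e e.injective⟩

theorem Matrix.exists_det_submatrix_ne_zero_of_le_rank [Fintype m] (M : Matrix m n K) {k : ℕ}
    (hk : k ≤ M.rank) : ∃ (f : Fin k → m) (g : Fin k → n), (M.submatrix f g).det ≠ 0 := by
  rw [rank_eq_finrank_span_cols] at hk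
  obtain ⟨g, hg⟩ := exists_linearIndependent_comp_of_le_finrank_span M.col hk
  have hN : (M.submatrix id g).rank = k := by
    rw [← rank_transpose]
    exact (hg.rank_matrix (M := (M.submatrix id g)ᵀ)).trans (Fintype.card_fin k)
  rw [rank_eq_finrank_span_row] at hN
  obtain ⟨f, hf⟩ := exists_linearIndependent_comp_of_le_finrank_span (M.submatrix id g).row hN.ge
  exact ⟨f, g, ((isUnit_iff_isUnit_det _).mp (linearIndependent_rows_iff_isUnit.mp hf)).ne_zero⟩

end MinorRank

section SemiGeneric

variable {K : Type*} [CommRing K] {σ m n : Type*} [Fintype σ]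

noncomputable def semiGenericMatrix (A : σ → Matrix m n K) : Matrix m n (MvPolynomial σ K) :=
  ∑ t, (X t : MvPolynomial σ K) • (A t).map C

theorem map_semiGenericMatrix {L : Type*} [CommRing L] (φ : MvPolynomial σ K →+* L)
    (A : σ → Matrix m n K) :
    (semiGenericMatrix A).map φ = ∑ t, φ (X t) • (A t).map (φ.comp (algebraMap K _)) := by
  ext i j
  simp [semiGenericMatrix, Matrix.sum_apply, MvPolynomial.algebraMap_eq]

theorem map_eval_semiGenericMatrix (c : σ → K) (A : σ → Matrix m n K) :
    (semiGenericMatrix A).map (eval c) = ∑ t, c t • A t := by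
  ext i j
  simp [semiGenericMatrix, Matrix.sum_apply]

theorem submatrix_semiGenericMatrix {m' n' : Type*} (A : σ → Matrix m n K) (f : m' → m)
    (g : n' → n) :
    (semiGenericMatrix A).submatrix f g = semiGenericMatrix fun t => (A t).submatrix f g := by
  ext i j
  simp [semiGenericMatrix, Matrix.sum_apply]

theorem det_semiGenericMatrix [Fintype n] [DecidableEq n] (B : σ → Matrix n n K) :
    (semiGenericMatrix B).det =
      ∑ u : n → σ, (∏ j, (X (u j) : MvPolynomial σ K)) * C (of fun j => B (u j) j).det := by
  let D :=
    (detRowAlternating : (n → MvPolynomial σ K) [⋀^n]→ₗ[MvPolynomial σ K] _).toMultilinearMap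
  have hrows :
      semiGenericMatrix B = fun j => ∑ t, (X t : MvPolynomial σ K) • fun j' => C (B t j j') := by
    ext j j'
    simp [semiGenericMatrix, Matrix.sum_apply]
  calc (semiGenericMatrix B).det = D fun j => ∑ t, X t • fun j' => C (B t j j') := by
        rw [hrows]; rfl
    _ = ∑ u : n → σ, D fun j => X (u j) • fun j' => C (B (u j) j j') := D.map_sum _
    _ = _ := by
      refine Finset.sum_congr rfl fun u _ => ?_
      rw [D.map_smul_univ, smul_eq_mul, RingHom.map_det]
      rfl

theorem degreeOf_det_semiGenericMatrix_lt [Nontrivial K] [Fintype n] [DecidableEq n]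
    (B : σ → Matrix n n K) (hB : ∀ t, (B t).det = 0) (i : σ) :
    (semiGenericMatrix B).det.degreeOf i < Fintype.card n := by
  classical
  have hn : 0 < Fintype.card n := by
    by_contra! h
    have : IsEmpty n := Fintype.card_eq_zero_iff.mp (Nat.le_zero.mp h)
    simpa [det_isEmpty] using hB i
  rw [det_semiGenericMatrix]
  refine (degreeOf_sum_le _ _ _).trans_lt ((Finset.sup_lt_iff hn).mpr fun u _ => ?_)
  by_cases hu : ∀ j, u j = i
  · have : (of fun j => B (u j) j) = B i := by ext j; simp [hu]
    simpa [this, hB] using hn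
  · push Not at hu
    obtain ⟨j₀, hj₀⟩ := hu
    calc _ ≤ (∏ j, (X (u j) : MvPolynomial σ K)).degreeOf i + 0 :=
          (degreeOf_mul_le _ _ _).trans_eq (by rw [degreeOf_C])
      _ ≤ ∑ j, (X (u j) : MvPolynomial σ K).degreeOf i := by
          rw [add_zero]; exact degreeOf_prod_le _ _ _
      _ = (Finset.univ.filter fun j => i = u j).card := by simp [degreeOf_X]
      _ < Fintype.card n :=
          Finset.card_lt_card (Finset.filter_ssubset.mpr ⟨j₀, Finset.mem_univ _, Ne.symm hj₀⟩)

theorem det_semiGenericMatrix_eq_zero [IsDomain K] [Fintype n] [DecidableEq n]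
    (B : σ → Matrix n n K)
    (hK : (Fintype.card n : Cardinal) ≤ Cardinal.mk K)
    (hB : ∀ c : σ → K, (∑ t, c t • B t).det = 0) : (semiGenericMatrix B).det = 0 := by
  classical
  obtain ⟨T, hT⟩ := Cardinal.exists_finset_eq_card hK
  refine eq_zero_of_eval_zero_at_prod_finset _ (fun _ => T) (fun i => hT ▸ ?_) fun c _ => ?_
  · refine degreeOf_det_semiGenericMatrix_lt B (fun t => ?_) i
    simpa [Pi.single_apply] using hB (Pi.single t 1)
  · rw [RingHom.map_det, RingHom.mapMatrix_apply, map_eval_semiGenericMatrix, hB]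

end SemiGeneric

section Rank

variable {K L σ m n : Type*} [Field K] [Field L] [Fintype σ] [Fintype m] [Fintype n]

theorem rank_map_semiGenericMatrix_le (φ : MvPolynomial σ K →+* L) (A : σ → Matrix m n K)
    {r : ℕ} (hK : (r : Cardinal) < Cardinal.mk K) (hA : ∀ c : σ → K, (∑ t, c t • A t).rank ≤ r) :
    ((semiGenericMatrix A).map φ).rank ≤ r := by
  by_contra! h
  obtain ⟨f, g, hfg⟩ := ((semiGenericMatrix A).map φ).exists_det_submatrix_ne_zero_of_le_rank h
  refine hfg ?_
  rw [submatrix_map, ← RingHom.mapMatrix_apply, ← RingHom.map_det, submatrix_semiGenericMatrix,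
    det_semiGenericMatrix_eq_zero _ (by simpa using hK), map_zero]
  intro c
  rw [← map_eval_semiGenericMatrix, ← submatrix_semiGenericMatrix, ← submatrix_map,
    map_eval_semiGenericMatrix]
  by_contra hc
  exact (hA c).not_gt ((∑ t, c t • A t).le_rank_of_det_submatrix_ne_zero hc)

theorem rank_sum_smul_le_rank_map_semiGenericMatrix {φ : MvPolynomial σ K →+* L}
    (hφ : Function.Injective φ) (A : σ → Matrix m n K) (c : σ → K) :
    (∑ t, c t • A t).rank ≤ ((semiGenericMatrix A).map φ).rank := by
  obtain ⟨f, g, hfg⟩ := (∑ t, c t • A t).exists_det_submatrix_ne_zero_of_le_rank le_rfl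
  have hspec : ((∑ t, c t • A t).submatrix f g).det
      = eval c ((semiGenericMatrix A).submatrix f g).det := by
    rw [RingHom.map_det, RingHom.mapMatrix_apply, ← submatrix_map, map_eval_semiGenericMatrix]
  refine Matrix.le_rank_of_det_submatrix_ne_zero _ (f := f) (g := g) ?_
  rw [submatrix_map, ← RingHom.mapMatrix_apply, ← RingHom.map_det, map_ne_zero_iff _ hφ]
  exact fun h => hfg (by rw [hspec, h, map_zero])

end Rank

theorem stmt2 {K : Type*} [Field K] {m n s : ℕ}
    (S : Submodule K (Matrix (Fin m) (Fin n) K)) (r : ℕ)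
    (hub : ∀ M ∈ S, M.rank ≤ r) (hmax : ∃ M ∈ S, M.rank = r)
    (hK : (r : Cardinal) < Cardinal.mk K)
    (A : Fin s → Matrix (Fin m) (Fin n) K)
    (hspan : Submodule.span K (Set.range A) = S) :
    (∑ i : Fin s,
      (algebraMap (MvPolynomial (Fin s) K) (FractionRing (MvPolynomial (Fin s) K))
          (MvPolynomial.X i)) •
        (A i).map ((algebraMap (MvPolynomial (Fin s) K)
            (FractionRing (MvPolynomial (Fin s) K))).comp
          (algebraMap K (MvPolynomial (Fin s) K)))).rank = r := by
  have hmem : ∀ M, M ∈ S ↔ ∃ c : Fin s → K, ∑ t, c t • A t = M := by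
    simp [← hspan, Submodule.mem_span_range_iff_exists_fun]
  obtain ⟨_, hM, rfl⟩ := hmax
  obtain ⟨c, rfl⟩ := (hmem _).mp hM
  rw [← map_semiGenericMatrix]
  exact le_antisymm
    (rank_map_semiGenericMatrix_le _ A hK fun c => hub _ ((hmem _).mpr ⟨c, rfl⟩))
    (rank_sum_smul_le_rank_map_semiGenericMatrix (IsFractionRing.injective _ _) A c)
end

section
/- Flanders-Atkinson lemma: Let 1 ≤ r ≤ min(m,n) with card(K) > r. Let J_r be the m×n matrix with I_r in the top-left block and zeros elsewhere, and let M = [[A,C],[B,D]] be an m×n matrix partitioned accordingly. If every linear combination of J_r and M has rank at most r, then D = 0 and B A^k C = 0 for every natural number k. -/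
/-!
Bordering the `A`-block of `x • J + M` by the `i`-th row of `B` and the `j`-th column of `C`
gives an `(r + 1) × (r + 1)` minor, which vanishes for every `x` because the rank is at most `r`.
As a polynomial in `x` this minor has degree at most `r`, the top coefficient being the
determinant of the singular bordered `J`; since `K` has more than `r` elements it vanishes in
`K[X]`. Expanding it through the adjugate gives `B adj(X + A) C = det(X + A) D` over `K[X]`.
The entries of `adj(X + A)` have degree `< r` while `det(X + A)` is monic of degree `r`, so
`D = 0`. Finally `A adj(X + A) = det(X + A) - X adj(X + A)` turns the vanishing of
`B A^k adj(X + A) C` into `det(X + A) (B A^k C) = B A^(k+1) adj(X + A) C`, and the same degree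
comparison yields `B A^k C = 0` for each `k` in turn.
-/

open Polynomial

namespace Matrix

variable {n : Type*} [Fintype n]

theorem map_C_mul_mul_map_C_mem_degreeLT {α : Type*} [CommRing α] {m p q : Type*} [Fintype m]
    {d : ℕ} {N : Matrix m n α[X]} (hN : ∀ i j, N i j ∈ degreeLT α d) (U : Matrix p m α)
    (V : Matrix n q α) (i : p) (j : q) :
    (U.map C * N * V.map C) i j ∈ degreeLT α d := by
  simp only [mul_apply, map_apply, mul_comm _ (C _), C_mul']
  exact Submodule.sum_mem _ fun k _ => Submodule.smul_mem _ _ <|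
    Submodule.sum_mem _ fun l _ => Submodule.smul_mem _ _ (hN l k)

theorem eq_zero_of_smul_map_C_mem_degreeLT {α : Type*} [CommRing α] {p q : Type*} {d : ℕ}
    {χ : α[X]} (hχ : χ.coeff d = 1) {Z : Matrix p q α}
    (h : ∀ i j, (χ • Z.map C) i j ∈ degreeLT α d) : Z = 0 := by
  ext i j
  simpa [coeff_mul_C, hχ] using coeff_eq_zero_of_degree_lt (mem_degreeLT.1 (h i j))

variable [DecidableEq n]

theorem det_X_smul_add_C_mem_degreeLT {α : Type*} [CommRing α] {J : Matrix n n α}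
    (hJ : J.det = 0) (M : Matrix n n α) :
    det ((X : α[X]) • J.map C + M.map C) ∈ degreeLT α (Fintype.card n) := by
  rw [mem_degreeLT, degree_lt_iff_coeff_zero]
  intro k hk
  rcases hk.eq_or_lt with rfl | hk
  · rw [coeff_det_X_add_C_card, hJ]
  · exact coeff_eq_zero_of_natDegree_lt ((natDegree_det_X_add_C_le J M).trans_lt hk)

theorem adjugate_X_smul_one_add_C_mem_degreeLT {α : Type*} [CommRing α] (A : Matrix n n α)
    (i j : n) : adjugate ((X : α[X]) • 1 + A.map C) i j ∈ degreeLT α (Fintype.card n) := by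
  have hrow : ((X : α[X]) • 1 + A.map C).updateRow j (Pi.single i 1) =
      (X : α[X]) • (updateRow 1 j 0).map C + (A.updateRow j (Pi.single i 1)).map C := by
    ext a b : 1
    by_cases ha : a = j
    · subst ha
      by_cases hb : b = i <;> simp [hb]
    · simp [updateRow_ne ha, one_apply]
  rw [adjugate_apply, hrow]
  exact det_X_smul_add_C_mem_degreeLT (det_eq_zero_of_row_eq_zero j (by simp)) _

theorem eq_zero_and_mul_pow_mul_eq_zero_of_mul_adjugate_mul_eq {α : Type*} [CommRing α]
    {p q : Type*} [Fintype p] [Fintype q] (A : Matrix n n α) (B : Matrix p n α)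
    (C : Matrix n q α) (D : Matrix p q α)
    (h : B.map Polynomial.C * adjugate ((X : α[X]) • 1 + A.map Polynomial.C) *
        C.map Polynomial.C = det ((X : α[X]) • 1 + A.map Polynomial.C) • D.map Polynomial.C) :
    D = 0 ∧ ∀ k, B * A ^ k * C = 0 := by
  set W := (X : α[X]) • 1 + A.map Polynomial.C with hW
  have hχ : W.det.coeff (Fintype.card n) = 1 := by
    simpa [hW, det_one] using coeff_det_X_add_C_card (1 : Matrix n n α) A
  have hAW : A.map Polynomial.C * adjugate W = W.det • 1 - (X : α[X]) • adjugate W := by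
    rw [eq_sub_iff_add_eq, ← mul_adjugate W, hW, Matrix.add_mul, Matrix.smul_mul,
      Matrix.one_mul, add_comm]
  set Y : ℕ → Matrix p q α[X] := fun k =>
    (B * A ^ k).map Polynomial.C * adjugate W * C.map Polynomial.C with hY
  have hY_mem : ∀ k i j, Y k i j ∈ degreeLT α (Fintype.card n) := fun k =>
    map_C_mul_mul_map_C_mem_degreeLT (adjugate_X_smul_one_add_C_mem_degreeLT A) _ _
  have hY_zero : Y 0 = W.det • D.map Polynomial.C := by simpa [hY] using h
  have hY_succ : ∀ k, Y (k + 1) = W.det • (B * A ^ k * C).map Polynomial.C - (X : α[X]) • Y k := by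
    intro k
    simp only [hY, pow_succ, ← Matrix.mul_assoc, Matrix.map_mul]
    rw [Matrix.mul_assoc _ (A.map _), hAW]
    simp [Matrix.mul_sub, Matrix.sub_mul, Matrix.mul_smul, Matrix.smul_mul]
  have hD : D = 0 := eq_zero_of_smul_map_C_mem_degreeLT hχ (hY_zero ▸ hY_mem 0)
  have hstep : ∀ k, Y k = 0 → B * A ^ k * C = 0 ∧ Y (k + 1) = 0 := by
    intro k hk
    have hBAC : B * A ^ k * C = 0 :=
      eq_zero_of_smul_map_C_mem_degreeLT hχ (by simpa [hY_succ, hk] using hY_mem (k + 1))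
    exact ⟨hBAC, by rw [hY_succ, hk, hBAC]; simp⟩
  have hY_eq_zero : ∀ k, Y k = 0 := fun k =>
    Nat.rec (by rw [hY_zero, hD]; simp) (fun k hk => (hstep k hk).2) k
  exact ⟨hD, fun k => (hstep k (hY_eq_zero k)).1⟩

theorem det_pow_mul_det_fromBlocks {α : Type*} [CommRing α] {ι : Type*} [Fintype ι]
    [DecidableEq ι] (W : Matrix n n α) (c : Matrix n ι α) (b : Matrix ι n α)
    (δ : Matrix ι ι α) :
    W.det ^ (Fintype.card n + Fintype.card ι) * (fromBlocks W c b δ).det =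
      W.det ^ (Fintype.card n + 1) * (W.det • δ - b * adjugate W * c).det := by
  have hprod : fromBlocks W c b δ * fromBlocks (adjugate W) (-(adjugate W * c)) 0 (W.det • 1) =
      fromBlocks (W.det • 1) 0 (b * adjugate W) (W.det • δ - b * adjugate W * c) := by
    rw [fromBlocks_multiply]
    simp [Matrix.mul_neg, ← Matrix.mul_assoc, mul_adjugate, sub_eq_neg_add]
  have hadj : W.det * (adjugate W).det = W.det ^ Fintype.card n := by
    rw [← det_mul, mul_adjugate, det_smul, det_one, mul_one]
  have hdet := congrArg (fun M => W.det * det M) hprod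
  simp only [det_mul, det_fromBlocks_zero₂₁, det_fromBlocks_zero₁₂, det_smul, det_one] at hdet
  linear_combination hdet - W.det ^ Fintype.card ι * (fromBlocks W c b δ).det * hadj

theorem mul_adjugate_mul_eq_of_det_fromBlocks_eq_zero {R : Type*} [CommRing R] [IsDomain R]
    {W : Matrix n n R} (hW : W.det ≠ 0) {c : Matrix n Unit R} {b : Matrix Unit n R}
    {δ : Matrix Unit Unit R} (h : (fromBlocks W c b δ).det = 0) :
    b * adjugate W * c = W.det • δ := by
  have := det_pow_mul_det_fromBlocks W c b δ
  rw [h, mul_zero, eq_comm, mul_eq_zero, det_unique (W.det • δ - _)] at this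
  ext
  simpa [sub_eq_zero, eq_comm] using this.resolve_left (pow_ne_zero _ hW)

theorem det_X_smul_add_C_eq_zero_of_forall {K : Type*} [CommRing K] [IsDomain K]
    {J M : Matrix n n K} (hJ : J.det = 0) (hK : (Fintype.card n : Cardinal) ≤ Cardinal.mk K)
    (h : ∀ x : K, (x • J + M).det = 0) : det ((X : K[X]) • J.map C + M.map C) = 0 := by
  by_contra hne
  refine hne (eq_zero_of_forall_eval_zero_of_natDegree_lt_card _ (fun x => ?_) ?_)
  · rw [← coe_evalRingHom, RingHom.map_det]
    convert h x
    ext i j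
    simp [mul_comm x]
  · have hdeg := (natDegree_lt_iff_degree_lt hne).2
      (mem_degreeLT.1 (det_X_smul_add_C_mem_degreeLT hJ M))
    exact (Nat.cast_lt.2 hdeg).trans_le hK

theorem det_eq_zero_of_rank_lt {K : Type*} [Field K] {N : Matrix n n K}
    (h : N.rank < Fintype.card n) : N.det = 0 := by
  by_contra hne
  exact h.ne (rank_of_isUnit N ((isUnit_iff_isUnit_det N).2 (isUnit_iff_ne_zero.2 hne)))

theorem mul_adjugate_mul_eq_det_smul_of_rank_le {K : Type*} [Field K] {p q : Type*} [Fintype p]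
    [Fintype q] (hK : (Fintype.card n : Cardinal) < Cardinal.mk K) (A : Matrix n n K)
    (B : Matrix p n K) (C : Matrix n q K) (D : Matrix p q K)
    (h : ∀ x : K, (fromBlocks (x • 1 + A) C B D).rank ≤ Fintype.card n) :
    B.map Polynomial.C * adjugate ((X : K[X]) • 1 + A.map Polynomial.C) * C.map Polynomial.C =
      det ((X : K[X]) • 1 + A.map Polynomial.C) • D.map Polynomial.C := by
  ext i j : 1
  set c := C.submatrix id fun _ : Unit => j
  set b := B.submatrix (fun _ : Unit => i) id
  set δ := D.submatrix (fun _ : Unit => i) fun _ : Unit => j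
  have hminor : ∀ x : K, (x • fromBlocks (1 : Matrix n n K) 0 0 (0 : Matrix Unit Unit K) +
      fromBlocks A c b δ).det = 0 := by
    intro x
    apply det_eq_zero_of_rank_lt
    have hsub : x • fromBlocks (1 : Matrix n n K) 0 0 (0 : Matrix Unit Unit K) +
        fromBlocks A c b δ = (fromBlocks (x • 1 + A) C B D).submatrix
          (Sum.map id fun _ => i) (Sum.map id fun _ => j) := by
      ext (k | k) (l | l) <;> simp [c, b, δ]
    rw [hsub, Fintype.card_sum, Fintype.card_unit]
    exact (rank_submatrix_le _ _ _).trans_lt (Nat.lt_succ_of_le (h x))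
  have hpoly := det_X_smul_add_C_eq_zero_of_forall (by simp [det_fromBlocks_zero₂₁])
    (by simpa using Cardinal.add_one_le_of_lt hK) hminor
  simp only [fromBlocks_map, fromBlocks_smul, fromBlocks_add, Matrix.map_one _ (map_zero _)
    (map_one _), Matrix.map_zero _ (map_zero _), smul_zero, zero_add] at hpoly
  have hW : det ((X : K[X]) • 1 + A.map Polynomial.C) ≠ 0 :=
    Monic.ne_zero (leadingCoeff_det_X_one_add_C A)
  simpa [mul_apply, c, b, δ] using
    congrFun₂ (mul_adjugate_mul_eq_of_det_fromBlocks_eq_zero hW hpoly) () ()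

end Matrix

theorem stmt4_general {K : Type*} [Field K] {r p q : ℕ}
    (hK : (r : Cardinal) < Cardinal.mk K)
    (A : Matrix (Fin r) (Fin r) K) (C : Matrix (Fin r) (Fin q) K)
    (B : Matrix (Fin p) (Fin r) K) (D : Matrix (Fin p) (Fin q) K)
    (h : ∀ α β : K,
      (α • Matrix.fromBlocks (1 : Matrix (Fin r) (Fin r) K) 0 0 0 +
        β • Matrix.fromBlocks A C B D).rank ≤ r) :
    D = 0 ∧ ∀ k : ℕ, B * A ^ k * C = 0 := by
  have hrank : ∀ x : K, (Matrix.fromBlocks (x • 1 + A) C B D).rank ≤ Fintype.card (Fin r) := by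
    intro x
    simpa [Matrix.fromBlocks_smul, Matrix.fromBlocks_add] using h x 1
  exact Matrix.eq_zero_and_mul_pow_mul_eq_zero_of_mul_adjugate_mul_eq A B C D
    (Matrix.mul_adjugate_mul_eq_det_smul_of_rank_le (by simpa using hK) A B C D hrank)

theorem stmt4 {K : Type*} [Field K] {r p q : ℕ} (hr : 1 ≤ r)
    (hK : (r : Cardinal) < Cardinal.mk K)
    (A : Matrix (Fin r) (Fin r) K) (C : Matrix (Fin r) (Fin q) K)
    (B : Matrix (Fin p) (Fin r) K) (D : Matrix (Fin p) (Fin q) K)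
    (h : ∀ α β : K,
      (α • Matrix.fromBlocks (1 : Matrix (Fin r) (Fin r) K) 0 0 0 +
        β • Matrix.fromBlocks A C B D).rank ≤ r) :
    D = 0 ∧ ∀ k : ℕ, B * A ^ k * C = 0 :=
  stmt4_general hK A C B D h
end

section
/- Let S be a finite-dimensional subspace of L(U,V), and let x₀ ∈ U be such that the rank of the evaluation map φ : f ↦ f(x₀) on S is maximal among all evaluation maps f ↦ f(x), x ∈ U. Assume card(K) > rk φ. Then for every f ∈ S with f(x₀) = 0, the image of f is contained in the image of φ, i.e. f(x) ∈ {g(x₀) : g ∈ S} for all x ∈ U. -/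
/-!
Suppose `f x₀ = 0` but `b := f x ∉ W := φ(S)`. Choose a section `σ : W → S` of `φ`, a projection
`π : V → W` with `π b = 0`, and put `T := π ∘ ev_x ∘ σ ∈ End W`. Then
`(σ w + d • f)(x - μ • x₀) = (σ w)(x) - μ • w + d • b`, whose image under `π` is `(T - μ) w`.
So if `μ` is not an eigenvalue of `T`, evaluation at `x - μ • x₀` is injective on the
`(rk φ + 1)`-dimensional space `σ(W) ⊕ K f`, contradicting the maximality of `rk φ`. Such a `μ`
exists because the characteristic polynomial of `T` has degree `rk φ < |K|`.
-/

open Module LinearMap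

section

variable {K V : Type*} [Field K] [AddCommGroup V] [Module K V]

theorem Module.End.exists_not_hasEigenvalue_of_finrank_lt_card {M : Type*} [AddCommGroup M]
    [Module K M] [FiniteDimensional K M] (T : End K M)
    (hK : (finrank K M : Cardinal) < Cardinal.mk K) : ∃ μ : K, ¬ T.HasEigenvalue μ := by
  by_contra! hall
  refine T.charpoly_monic.ne_zero
    (Polynomial.eq_zero_of_forall_eval_zero_of_natDegree_lt_card _ (fun μ => ?_) ?_)
  · exact (T.hasEigenvalue_iff_isRoot_charpoly μ).mp (hall μ)
  · rwa [T.charpoly_natDegree]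

theorem Submodule.exists_retraction_apply_eq_zero {W : Submodule K V} {b : V} (hb : b ∉ W) :
    ∃ π : V →ₗ[K] W, (∀ w : W, π w = w) ∧ π b = 0 := by
  have hker : ker ((K ∙ b).mkQ ∘ₗ W.subtype) = ⊥ := by
    rw [ker_comp, Submodule.ker_mkQ, ← Submodule.disjoint_iff_comap_eq_bot]
    exact (Submodule.disjoint_span_singleton' (by rintro rfl; exact hb W.zero_mem)).mpr hb
  obtain ⟨L, hL⟩ := exists_leftInverse_of_injective _ hker
  refine ⟨L ∘ₗ (K ∙ b).mkQ, fun w => LinearMap.congr_fun hL w, ?_⟩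
  simp [(Submodule.Quotient.mk_eq_zero _).mpr (Submodule.mem_span_singleton_self b)]

theorem exists_finrank_range_lt_finrank_range_sub_smul {M : Type*} [AddCommGroup M] [Module K M]
    [FiniteDimensional K M] (φ ψ : M →ₗ[K] V) {f : M} (hf : φ f = 0) (hψf : ψ f ∉ range φ)
    (hK : (finrank K (range φ) : Cardinal) < Cardinal.mk K) :
    ∃ μ : K, finrank K (range φ) < finrank K (range (ψ - μ • φ)) := by
  obtain ⟨σ, hσ⟩ := φ.rangeRestrict.exists_rightInverse_of_surjective φ.range_rangeRestrict
  have hφσ : ∀ w, φ (σ w) = w := fun w => congr_arg Subtype.val (LinearMap.congr_fun hσ w)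
  obtain ⟨π, hπW, hπb⟩ := Submodule.exists_retraction_apply_eq_zero hψf
  obtain ⟨μ, hμ⟩ := Module.End.exists_not_hasEigenvalue_of_finrank_lt_card (π ∘ₗ ψ ∘ₗ σ) hK
  let Φ : (range φ × K) →ₗ[K] M := σ.coprod (toSpanSingleton K M f)
  have hΦ : ∀ p, (ψ - μ • φ) (Φ p) = ψ (σ p.1) - μ • (p.1 : V) + p.2 • ψ f := by
    rintro ⟨w, d⟩
    simp only [Φ, coprod_apply, toSpanSingleton_apply, LinearMap.sub_apply, map_add, map_smul,
      LinearMap.smul_apply, hφσ, hf, smul_zero]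
    module
  have hinj : Function.Injective ((ψ - μ • φ) ∘ₗ Φ) := by
    refine (injective_iff_map_eq_zero _).mpr fun ⟨w, d⟩ h0 => ?_
    rw [comp_apply, hΦ] at h0
    have hw : w = 0 := by
      by_contra hw
      refine hμ (Module.End.hasEigenvalue_of_hasEigenvector (x := w) ⟨?_, hw⟩)
      rw [Module.End.mem_eigenspace_iff]
      simpa [hπW, hπb, sub_eq_zero] using congr_arg π h0
    have hψf0 : ψ f ≠ 0 := fun h => hψf (h ▸ (range φ).zero_mem)
    subst hw
    simp only [ZeroMemClass.coe_zero, map_zero, smul_zero, sub_zero, zero_add] at h0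
    simp [(smul_eq_zero.mp h0).resolve_right hψf0]
  refine ⟨μ, ?_⟩
  calc finrank K (range φ) < finrank K (range φ × K) := by simp
    _ = finrank K (range ((ψ - μ • φ) ∘ₗ Φ)) := (finrank_range_of_inj hinj).symm
    _ ≤ finrank K (range (ψ - μ • φ)) := Submodule.finrank_mono (range_comp_le_range _ _)

end

theorem stmt5 {K U V : Type*} [Field K] [AddCommGroup U] [Module K U]
    [AddCommGroup V] [Module K V] (S : Submodule K (U →ₗ[K] V))
    [FiniteDimensional K S] (x₀ : U)
    (hopt : ∀ x : U, LinearMap.rank ((LinearMap.applyₗ x) ∘ₗ S.subtype) ≤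
      LinearMap.rank ((LinearMap.applyₗ x₀) ∘ₗ S.subtype))
    (hK : ((Module.finrank K
        (LinearMap.range ((LinearMap.applyₗ x₀) ∘ₗ S.subtype)) : ℕ) : Cardinal)
      < Cardinal.mk K) :
    ∀ f ∈ S, f x₀ = 0 → ∀ x : U,
      f x ∈ LinearMap.range ((LinearMap.applyₗ x₀) ∘ₗ S.subtype) := by
  intro f hfS hf0 x
  by_contra hfx
  obtain ⟨μ, hμ⟩ := exists_finrank_range_lt_finrank_range_sub_smul
    (applyₗ x₀ ∘ₗ S.subtype) (applyₗ x ∘ₗ S.subtype) (f := ⟨f, hfS⟩) hf0 hfx hK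
  have hev : applyₗ x ∘ₗ S.subtype - μ • applyₗ x₀ ∘ₗ S.subtype =
      applyₗ (x - μ • x₀) ∘ₗ S.subtype := by
    ext g
    simp
  rw [hev] at hμ
  have hle := hopt (x - μ • x₀)
  rw [LinearMap.rank, LinearMap.rank, ← finrank_eq_rank, ← finrank_eq_rank] at hle
  exact absurd (Nat.cast_le.mp hle) hμ.not_ge
end

section
/- Let S be an n-dimensional c-LLD subspace of L(U,V) over a field K with card(K) > n − c. Then there exist a subspace T of S with dim T ≥ c and a subspace V₀ of V with dim V₀ ≤ n − c such that the image of every f ∈ T is contained in V₀. -/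
/-!
Choose `x₀` at which the image space `S x₀ = {g x₀ | g ∈ S}` has maximal dimension `r`; then
`r ≤ n - c` by rank–nullity and the c-LLD hypothesis, and we take `T = {f ∈ S | f x₀ = 0}` and
`V₀ = S x₀`. If some `f ∈ T` had `f x ∉ V₀`, project `V` onto `V₀` along a complement containing
`f x` and lift `V₀` linearly back to `S`. Evaluating lifts at `x - μ x₀` then induces `A - μ` on
`V₀` for a fixed endomorphism `A`, and since `A` has at most `r < |K|` eigenvalues some `A - μ` is
onto. Then `S (x - μ x₀)` maps onto `V₀` and also contains `f (x - μ x₀) = f x ≠ 0` in the kernel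
of the projection, so its dimension exceeds `r`.
-/

open Module LinearMap Polynomial Cardinal

theorem Module.End.exists_not_hasEigenvalue {K E : Type*} [Field K] [AddCommGroup E] [Module K E]
    [FiniteDimensional K E] (f : End K E) (hK : (finrank K E : Cardinal) < #K) :
    ∃ μ, ¬ f.HasEigenvalue μ := by
  by_contra! h
  refine f.charpoly_monic.ne_zero <| eq_zero_of_forall_eval_zero_of_natDegree_lt_card _
    (fun μ => (f.hasEigenvalue_iff_isRoot_charpoly μ).1 (h μ)) ?_
  rwa [f.charpoly_natDegree]

theorem Module.End.surjective_sub_algebraMap_of_not_hasEigenvalue {K E : Type*} [Field K]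
    [AddCommGroup E] [Module K E] [FiniteDimensional K E] {f : End K E} {μ : K}
    (h : ¬ f.HasEigenvalue μ) : Function.Surjective (f - algebraMap K (End K E) μ) := by
  rw [hasEigenvalue_iff_mem_spectrum, spectrum.mem_iff, not_not, ← IsUnit.neg_iff, neg_sub] at h
  exact ((Module.End.isUnit_iff _).1 h).2

section Submodule

variable {K V W : Type*} [Field K] [AddCommGroup V] [Module K V] [AddCommGroup W] [Module K W]

theorem Submodule.finrank_map_add_finrank_inf_ker (p : Submodule K V) [FiniteDimensional K p]
    (f : V →ₗ[K] W) : finrank K (p.map f) + finrank K ↥(p ⊓ ker f) = finrank K p := by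
  rw [← (f.domRestrict p).finrank_range_add_finrank_ker, range_domRestrict, ker_domRestrict,
    ← Submodule.finrank_map_subtype_eq, Submodule.map_comap_subtype]

theorem Submodule.finrank_lt_of_map_eq_top {p : Submodule K V} [FiniteDimensional K p]
    {π : V →ₗ[K] W} (hp : p.map π = ⊤) {v : V} (hvp : v ∈ p) (hv : v ≠ 0) (hπv : π v = 0) :
    finrank K W < finrank K p := by
  have hker : 0 < finrank K ↥(p ⊓ ker π) :=
    Module.finrank_pos_iff_exists_ne_zero.2 ⟨⟨v, hvp, hπv⟩, fun h => hv (congrArg Subtype.val h)⟩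
  have := p.finrank_map_add_finrank_inf_ker π
  rw [hp, finrank_top] at this
  omega

end Submodule

theorem apply_mem_map_applyₗ_of_forall_finrank_le {K U V : Type*} [Field K] [AddCommGroup U]
    [Module K U] [AddCommGroup V] [Module K V] (S : Submodule K (U →ₗ[K] V))
    [FiniteDimensional K S] {x₀ : U}
    (hmax : ∀ x, finrank K (S.map (applyₗ x)) ≤ finrank K (S.map (applyₗ x₀)))
    (hK : (finrank K (S.map (applyₗ x₀)) : Cardinal) < #K)
    {f : U →ₗ[K] V} (hf : f ∈ S) (hfx₀ : f x₀ = 0) (x : U) : f x ∈ S.map (applyₗ x₀) := by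
  set V₀ := S.map (applyₗ x₀)
  by_contra hfx
  have hfx0 : f x ≠ 0 := fun h => hfx (by rw [h]; exact V₀.zero_mem)
  obtain ⟨Q, hfxQ, hQ⟩ : ∃ Q, K ∙ f x ≤ Q ∧ IsCompl Q V₀ :=
    ((Submodule.disjoint_span_singleton' hfx0).2 hfx).symm.exists_isCompl
  let π := V₀.projectionOnto Q hQ.symm
  obtain ⟨σ, hσ⟩ := ((applyₗ x₀).submoduleMap S).exists_rightInverse_of_surjective
    (range_eq_top.2 (submoduleMap_surjective _ _))
  have hσx₀ (v : V₀) : (σ v : U →ₗ[K] V) x₀ = v := congrArg Subtype.val (LinearMap.congr_fun hσ v)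
  let A : End K V₀ := π ∘ₗ applyₗ x ∘ₗ S.subtype ∘ₗ σ
  obtain ⟨μ, hμ⟩ := A.exists_not_hasEigenvalue hK
  have hπσ (v : V₀) :
      π ((σ v : U →ₗ[K] V) (x - μ • x₀)) = (A - algebraMap K (End K V₀) μ) v := by
    simp [A, π, hσx₀, Submodule.projectionOnto_apply_left]
  have hmap_eq_top : (S.map (applyₗ (x - μ • x₀))).map π = ⊤ := by
    refine Submodule.eq_top_iff'.2 fun u => ?_
    obtain ⟨v, rfl⟩ := Module.End.surjective_sub_algebraMap_of_not_hasEigenvalue hμ u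
    exact ⟨_, ⟨σ v, (σ v).2, rfl⟩, hπσ v⟩
  refine (hmax (x - μ • x₀)).not_gt (Submodule.finrank_lt_of_map_eq_top hmap_eq_top
    ⟨f, hf, by simp [hfx₀]⟩ hfx0 ?_)
  exact Submodule.projectionOnto_apply_of_mem_right _ (hfxQ (Submodule.mem_span_singleton_self _))

theorem stmt7 {K U V : Type*} [Field K] [AddCommGroup U] [Module K U]
    [AddCommGroup V] [Module K V] {n c : ℕ} (S : Submodule K (U →ₗ[K] V))
    (hdim : Module.finrank K S = n) (hc1 : 1 ≤ c) (hcn : c ≤ n)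
    (hK : ((n - c : ℕ) : Cardinal) < Cardinal.mk K)
    (hLLD : ∀ x : U,
      c ≤ Module.finrank K ↥(S ⊓ LinearMap.ker (LinearMap.applyₗ x))) :
    ∃ T : Submodule K (U →ₗ[K] V), T ≤ S ∧ c ≤ Module.finrank K T ∧
      ∃ V₀ : Submodule K V, Module.finrank K V₀ ≤ n - c ∧
        ∀ f ∈ T, ∀ x : U, f x ∈ V₀ := by
  have : FiniteDimensional K S := Module.finite_of_finrank_pos (by omega)
  have hrank (x : U) : finrank K (S.map (applyₗ x)) ≤ n - c := by
    have := S.finrank_map_add_finrank_inf_ker (applyₗ x)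
    have := hLLD x
    omega
  obtain ⟨_, ⟨x₀, rfl⟩, hx₀⟩ := BddAbove.exists_isGreatest_of_nonempty
    ⟨n - c, Set.forall_mem_range.2 hrank⟩
    (Set.range_nonempty fun x : U => finrank K (S.map (applyₗ x)))
  refine ⟨S ⊓ ker (applyₗ x₀), inf_le_left, hLLD x₀, S.map (applyₗ x₀), hrank x₀, ?_⟩
  rintro f ⟨hf, hfx₀⟩ x
  exact apply_mem_map_applyₗ_of_forall_finrank_le S (fun x => hx₀ ⟨x, rfl⟩)
    ((Nat.cast_le.2 (hrank x₀)).trans_lt hK) hf hfx₀ x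
end

section
/- Let K be a finite field with q elements and S an n-dimensional c-LLD subspace of L(U,V) with 1 ≤ c ≤ n−1. Then at least q^c elements of S have rank at most n − c. -/
/-!
Restrict the maps of `S` to a finite-dimensional `U₀ ≤ U` on which every nonzero `f ∈ S` stays
nonzero and every `f` of rank `> n - c` keeps rank `> n - c`; put `u = dim U₀`. Count the pairs
`(f, x) ∈ S × U₀` with `f x = 0`. Each `x` is killed by at least `q ^ c` maps, so there are at least
`q ^ (u + c)` pairs. A map `f` kills `q ^ (u - rank (f|U₀))` vectors: `q ^ u` for `f = 0`, at most
`q ^ (u - 1)` for the other maps of rank `≤ n - c`, and at most `q ^ (u - (n - c + 1))` for the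
remaining ones. As `|S| = q ^ n`, comparing the two counts forces at least `q ^ c` maps of rank
`≤ n - c`.
-/

open Module Submodule LinearMap Finset

section Restriction

variable {K U V : Type*} [Field K] [AddCommGroup U] [Module K U] [AddCommGroup V] [Module K V]

lemma LinearMap.rank_domRestrict_mono (f : U →ₗ[K] V) {W W' : Submodule K U} (h : W ≤ W') :
    rank (f.domRestrict W) ≤ rank (f.domRestrict W') := by
  rw [LinearMap.rank, LinearMap.rank, range_domRestrict, range_domRestrict]
  exact Submodule.rank_mono (map_mono h)

lemma LinearMap.exists_finiteDimensional_le_rank_domRestrict (f : U →ₗ[K] V) {k : ℕ}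
    (hk : k ≤ rank f) :
    ∃ W : Submodule K U, FiniteDimensional K W ∧ (k : Cardinal) ≤ rank (f.domRestrict W) := by
  obtain ⟨s, rfl, hs⟩ := le_rank_iff_exists_linearIndependent_finset.1 hk
  refine ⟨span K s, FiniteDimensional.span_finset K s, ?_⟩
  let w (x : (s : Set U)) : (span K (s : Set U)).map f := ⟨f x, mem_map_of_mem (subset_span x.2)⟩
  have hw : LinearIndependent K w := LinearIndependent.of_comp (Submodule.subtype _) hs
  have := hw.cardinal_lift_le_rank
  rw [LinearMap.rank, range_domRestrict]
  simpa only [Cardinal.mk_fintype, Finset.coe_sort_coe, Fintype.card_coe, Cardinal.lift_natCast,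
    Cardinal.nat_le_lift_iff] using this

lemma LinearMap.exists_finiteDimensional_forall_min_le_rank_domRestrict {ι : Type*} [Finite ι]
    (f : ι → U →ₗ[K] V) (k : ℕ) :
    ∃ W : Submodule K U, FiniteDimensional K W ∧
      ∀ i, min (k : Cardinal) (rank (f i)) ≤ rank ((f i).domRestrict W) := by
  have (i : ι) : ∃ W : Submodule K U, FiniteDimensional K W ∧
      min (k : Cardinal) (rank (f i)) ≤ rank ((f i).domRestrict W) := by
    obtain ⟨j, hj⟩ :=
      Cardinal.lt_aleph0.1 ((min_le_left _ (rank (f i))).trans_lt Cardinal.natCast_lt_aleph0)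
    rw [hj]
    exact (f i).exists_finiteDimensional_le_rank_domRestrict (hj ▸ min_le_right _ _)
  choose W hW hfW using this
  exact ⟨⨆ i, W i, finiteDimensional_iSup W,
    fun i => (hfW i).trans ((f i).rank_domRestrict_mono (le_iSup W i))⟩

lemma LinearMap.one_le_rank {f : U →ₗ[K] V} (hf : f ≠ 0) : 1 ≤ rank f := by
  obtain ⟨x, hx⟩ := DFunLike.ne_iff.1 hf
  exact Cardinal.one_le_iff_pos.2 <|
    rank_pos_iff_exists_ne_zero.2 ⟨⟨f x, mem_range_self f x⟩, by simpa using hx⟩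

end Restriction

section Counting

variable {K U V : Type*} [Field K] [Fintype K] [AddCommGroup U] [Module K U] [AddCommGroup V]
  [Module K V]

lemma LinearMap.pow_mul_natCard_ker_le {M N : Type*} [AddCommGroup M] [Module K M]
    [FiniteDimensional K M] [AddCommGroup N] [Module K N] (g : M →ₗ[K] N) {k : ℕ}
    (hk : k ≤ rank g) : Fintype.card K ^ k * Nat.card (ker g) ≤ Fintype.card K ^ finrank K M := by
  have hk' : k ≤ finrank K (range g) := by
    rwa [LinearMap.rank, ← finrank_eq_rank, Nat.cast_le] at hk
  calc Fintype.card K ^ k * Nat.card (ker g)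
      ≤ Fintype.card K ^ finrank K (range g) * Fintype.card K ^ finrank K (ker g) := by
        rw [natCard_eq_pow_finrank (K := K), Nat.card_eq_fintype_card]
        exact Nat.mul_le_mul_right _ (Nat.pow_le_pow_right Fintype.card_pos hk')
    _ = Fintype.card K ^ finrank K M := by
        rw [← pow_add, finrank_range_add_finrank_ker]

lemma pow_finrank_mul_pow_le_sum_natCard_ker_domRestrict (S : Submodule K (U →ₗ[K] V))
    [Fintype S] (W : Submodule K U) [FiniteDimensional K W] {c : ℕ}
    (hS : ∀ x : U, c ≤ finrank K ↥(S ⊓ ker (applyₗ x))) :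
    Fintype.card K ^ finrank K W * Fintype.card K ^ c ≤
      ∑ f : S, Nat.card (ker ((f : U →ₗ[K] V).domRestrict W)) := by
  classical
  have : Finite W := Module.finite_of_finite K
  have : Fintype W := Fintype.ofFinite W
  have hx (x : W) : Fintype.card K ^ c ≤ #{f : S | (f : U →ₗ[K] V) x = 0} := by
    have hcard : #{f : S | (f : U →ₗ[K] V) x = 0} = Nat.card ↥(S ⊓ ker (applyₗ (x : U))) := by
      rw [← Fintype.card_subtype, ← Nat.card_eq_fintype_card]
      exact Nat.card_congr (Equiv.subtypeSubtypeEquivSubtypeInter (· ∈ S) (fun f => f x = 0))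
    rw [hcard, natCard_eq_pow_finrank (K := K), Nat.card_eq_fintype_card]
    exact Nat.pow_le_pow_right Fintype.card_pos (hS x)
  calc Fintype.card K ^ finrank K W * Fintype.card K ^ c = ∑ _x : W, Fintype.card K ^ c := by
        rw [sum_const, card_univ, card_eq_pow_finrank (K := K) (V := W), smul_eq_mul]
    _ ≤ ∑ x : W, #{f : S | (f : U →ₗ[K] V) x = 0} := sum_le_sum fun x _ => hx x
    _ = ∑ f : S, #{x : W | (f : U →ₗ[K] V) x = 0} := by
        simp only [card_filter]
        exact sum_comm
    _ = ∑ f : S, Nat.card (ker ((f : U →ₗ[K] V).domRestrict W)) := by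
        refine sum_congr rfl fun f _ => ?_
        rw [← Fintype.card_subtype, ← Nat.card_eq_fintype_card]
        rfl

end Counting

lemma SetLike.ncard_setOf_mem_and_eq_card_filter {A α : Type*} [SetLike A α] (s : A) [Fintype s]
    (P : α → Prop) [DecidablePred P] : {x | x ∈ s ∧ P x}.ncard = #{x : s | P x} := by
  rw [← Nat.card_coe_set_eq, ← Fintype.card_subtype, ← Nat.card_eq_fintype_card]
  exact Nat.card_congr (Equiv.subtypeSubtypeEquivSubtypeInter _ _).symm

lemma le_card_of_tiered_sum_bound {α : Type*} [Fintype α] [DecidableEq α] (T : Finset α) {a₀ : α}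
    (ha₀ : a₀ ∈ T) (g : α → ℕ) {q p Q B : ℕ} (hq : 2 ≤ q) (hB : 0 < B)
    (hcard : Fintype.card α = p * Q) (hsum : B * Q ≤ ∑ a, g a) (h₀ : g a₀ ≤ B)
    (hT : ∀ a ∈ T, a ≠ a₀ → q * g a ≤ B) (hTc : ∀ a ∉ T, p * q * g a ≤ B) : Q ≤ #T := by
  have ht : 1 ≤ #T := card_pos.2 ⟨a₀, ha₀⟩
  have htc : #(univ \ T) = p * Q - #T := by
    rw [card_sdiff_of_subset (subset_univ T), card_univ, hcard]
  have hsplit : ∑ a, g a = g a₀ + ∑ a ∈ T.erase a₀, g a + ∑ a ∈ univ \ T, g a := by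
    rw [add_sum_erase T g ha₀, add_comm, sum_sdiff (subset_univ T)]
  have hbound : B * (p * q * Q) ≤ B * (p * q + (#T - 1) * p + (p * Q - #T)) := by
    calc B * (p * q * Q) = p * q * (B * Q) := by ring
      _ ≤ p * q * ∑ a, g a := Nat.mul_le_mul_left _ hsum
      _ = p * q * g a₀ + ∑ a ∈ T.erase a₀, p * (q * g a) + ∑ a ∈ univ \ T, p * q * g a := by
        rw [hsplit, mul_add, mul_add, mul_sum, mul_sum]
        simp only [mul_assoc]
      _ ≤ p * q * B + ∑ a ∈ T.erase a₀, p * B + ∑ a ∈ univ \ T, B := by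
        gcongr with a ha a ha
        · exact hT a (mem_of_mem_erase ha) (ne_of_mem_erase ha)
        · exact hTc a (mem_sdiff.1 ha).2
      _ = B * (p * q + (#T - 1) * p + (p * Q - #T)) := by
        rw [sum_const, sum_const, card_erase_of_mem ha₀, htc, smul_eq_mul, smul_eq_mul]; ring
  have hle := Nat.le_of_mul_le_mul_left hbound hB
  have htQ : #T ≤ p * Q := hcard ▸ card_le_univ T
  by_contra! hlt
  zify [ht, htQ] at hle hlt hq
  have hp : (0 : ℤ) ≤ p := Int.natCast_nonneg p
  have hQ : (0 : ℤ) ≤ Q - 1 := by omega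
  have htQ' : (0 : ℤ) ≤ Q - 1 - #T := by omega
  nlinarith [mul_nonneg (mul_nonneg hp (sub_nonneg.2 hq)) hQ, mul_nonneg hp htQ']

theorem stmt8_general {K U V : Type*} [Field K] [Fintype K] [AddCommGroup U] [Module K U]
    [AddCommGroup V] [Module K V] {n c : ℕ} (S : Submodule K (U →ₗ[K] V))
    (hdim : Module.finrank K S = n) (hc1 : 1 ≤ c)
    (hLLD : ∀ x : U,
      c ≤ Module.finrank K ↥(S ⊓ LinearMap.ker (LinearMap.applyₗ x))) :
    (Fintype.card K) ^ c ≤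
      {f : U →ₗ[K] V | f ∈ S ∧ LinearMap.rank f ≤ ((n - c : ℕ) : Cardinal)}.ncard := by
  classical
  have hcn : c ≤ n := by
    have hS : S ⊓ ker (applyₗ (0 : U)) = S := inf_eq_left.2 fun f _ => by simp
    have h := hLLD 0
    rwa [hS, hdim] at h
  have : FiniteDimensional K S := Module.finite_of_finrank_pos (by omega)
  have : Finite S := Module.finite_of_finite K
  have : Fintype S := Fintype.ofFinite S
  obtain ⟨U₀, hU₀, hrank⟩ := exists_finiteDimensional_forall_min_le_rank_domRestrict
    (fun f : S => (f : U →ₗ[K] V)) (n - c + 1)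
  rw [SetLike.ncard_setOf_mem_and_eq_card_filter S]
  refine le_card_of_tiered_sum_bound _ (a₀ := 0) (by simp)
    (fun f : S => Nat.card (ker ((f : U →ₗ[K] V).domRestrict U₀)))
    (q := Fintype.card K) (p := Fintype.card K ^ (n - c)) Fintype.one_lt_card (by positivity) ?_
    (pow_finrank_mul_pow_le_sum_natCard_ker_domRestrict S U₀ hLLD) ?_ ?_ ?_
  · rw [card_eq_pow_finrank (K := K) (V := S), hdim, ← pow_add, Nat.sub_add_cancel hcn]
  · simpa using pow_mul_natCard_ker_le (((0 : S) : U →ₗ[K] V).domRestrict U₀) (k := 0) (by simp)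
  · intro f _ hf
    have hone : 1 ≤ min ((n - c + 1 : ℕ) : Cardinal) (rank (f : U →ₗ[K] V)) :=
      le_min (by simp) (one_le_rank (by simpa using hf))
    simpa only [pow_one] using
      pow_mul_natCard_ker_le (k := 1) _ (by exact_mod_cast hone.trans (hrank f))
  · intro f hf
    have hlt : ((n - c : ℕ) : Cardinal) < rank (f : U →ₗ[K] V) := by simpa using hf
    have hm : ((n - c + 1 : ℕ) : Cardinal) ≤
        min ((n - c + 1 : ℕ) : Cardinal) (rank (f : U →ₗ[K] V)) :=
      le_min le_rfl (by exact_mod_cast Cardinal.natCast_add_one_le_iff.2 hlt)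
    simpa [pow_succ] using pow_mul_natCard_ker_le _ (hm.trans (hrank f))

theorem stmt8 {K U V : Type*} [Field K] [Fintype K] [AddCommGroup U] [Module K U]
    [AddCommGroup V] [Module K V] {n c : ℕ} (S : Submodule K (U →ₗ[K] V))
    (hdim : Module.finrank K S = n) (hc1 : 1 ≤ c) (hcn : c ≤ n - 1)
    (hLLD : ∀ x : U,
      c ≤ Module.finrank K ↥(S ⊓ LinearMap.ker (LinearMap.applyₗ x))) :
    (Fintype.card K) ^ c ≤
      {f : U →ₗ[K] V | f ∈ S ∧ LinearMap.rank f ≤ ((n - c : ℕ) : Cardinal)}.ncard :=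
  stmt8_general S hdim hc1 hLLD
end

section
/- Let L be a field extension of K of finite degree d, and V a finite-dimensional L-vector space. For every K-linear subspace W of V whose K-dimension is a multiple of d, there exists an L-linear subspace W' of V with V = W ⊕ W' (as K-vector spaces). -/
/-!
Pick `v` with `L v ∩ W = 0`; then `W` maps injectively into `V ⧸ L v`, whose `L`-dimension is one
less, and the preimage of an `L`-complement found there by induction is an `L`-complement of `W`.
Such a `v` exists as soon as `dim_K W + d ≤ dim_K V`, which divisibility by `d` guarantees when
`W ≠ V`. Over a finite `K`, otherwise `V = Lˣ • W` would have at most `(|L| - 1) |W| < |V|`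
elements. Over an infinite `K`, take `v₀` for which `φ_{v₀} : ℓ ↦ ℓ v₀ mod W` has maximal rank.
Since `φ_{v₀ + t v} = φ_{v₀} + t φ_v`, lower semicontinuity of rank along this pencil forces
`φ_v x ∈ range φ_{v₀}` for every `x ∈ ker φ_{v₀}` and every `v`; for `x ≠ 0` the elements `x v`
exhaust `V`, so `range φ_{v₀} = V ⧸ W`, whose dimension is at least `d`: hence `ker φ_{v₀} = 0`.
-/

open Module LinearMap Submodule

section

variable {K : Type*} [Field K]

theorem LinearMap.exists_ne_zero_injective_add_smul [Infinite K] {E Q : Type*}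
    [AddCommGroup E] [Module K E] [FiniteDimensional K E] [AddCommGroup Q] [Module K Q]
    (f g : E →ₗ[K] Q) (hf : Function.Injective f) :
    ∃ t : K, t ≠ 0 ∧ Function.Injective (f + t • g) := by
  obtain ⟨π, hπ⟩ := f.exists_leftInverse_of_injective (ker_eq_bot.2 hf)
  -- `π ∘ (f + t • g) = 1 + t • (π ∘ g)` is injective unless `-t⁻¹` is an eigenvalue of `π ∘ g`.
  obtain ⟨μ, hμ⟩ := ((Module.End.finite_hasEigenvalue (π ∘ₗ g)).insert 0).exists_notMem
  rw [Set.mem_insert_iff, not_or] at hμ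
  refine ⟨-μ⁻¹, by simpa using hμ.1, (injective_iff_map_eq_zero _).2 fun e he => ?_⟩
  by_contra he0
  have hπe : π (f e + (-μ⁻¹) • g e) = 0 := by simpa using congrArg π he
  rw [map_add, map_smul, ← comp_apply π f, hπ, id_apply, neg_smul, add_neg_eq_zero] at hπe
  have heig : (π ∘ₗ g) e = μ • e := by
    rw [comp_apply]
    nth_rw 2 [hπe]
    rw [smul_smul, mul_inv_cancel₀ hμ.1, one_smul]
  exact hμ.2 (Module.End.hasEigenvalue_of_hasEigenvector
    ⟨Module.End.mem_eigenspace_iff.2 heig, he0⟩)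

theorem LinearMap.mem_range_of_finrank_range_add_smul_le [Infinite K] {A Q : Type*}
    [AddCommGroup A] [Module K A] [AddCommGroup Q] [Module K Q] [FiniteDimensional K Q]
    (φ ψ : A →ₗ[K] Q) (hmax : ∀ t : K, finrank K (range (φ + t • ψ)) ≤ finrank K (range φ))
    {x : A} (hx : φ x = 0) : ψ x ∈ range φ := by
  by_contra hψx
  obtain ⟨s, hs⟩ := φ.rangeRestrict.exists_rightInverse_of_surjective φ.range_rangeRestrict
  have hφs (u : range φ) : φ (s u) = u := congrArg Subtype.val (LinearMap.congr_fun hs u)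
  let M₀ : K × range φ →ₗ[K] Q := (toSpanSingleton K Q (ψ x)).coprod (range φ).subtype
  have hM₀ : Function.Injective M₀ := by
    refine (injective_iff_map_eq_zero _).2 fun ⟨a, u⟩ h => ?_
    have ha : a = 0 := by
      by_contra ha
      refine hψx ⟨-(a⁻¹ • s u), ?_⟩
      have hu : (u : Q) = -(a • ψ x) := eq_neg_of_add_eq_zero_right h
      simp [hφs, hu, smul_smul, ha]
    simp only [M₀, ha, coprod_apply, toSpanSingleton_apply, zero_smul, zero_add] at h
    exact Prod.ext ha (Subtype.ext h)
  obtain ⟨t, ht, hinj⟩ :=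
    M₀.exists_ne_zero_injective_add_smul (ψ ∘ₗ s ∘ₗ snd K K (range φ)) hM₀
  -- `a • ψ x = (φ + t • ψ) ((t⁻¹ * a) • x)` because `φ x = 0`.
  have hle : range (M₀ + t • ψ ∘ₗ s ∘ₗ snd K K (range φ)) ≤ range (φ + t • ψ) := by
    rintro _ ⟨⟨a, u⟩, rfl⟩
    refine ⟨(t⁻¹ * a) • x + s u, ?_⟩
    simp [M₀, hx, hφs, smul_smul, ht]
    abel
  have := Submodule.finrank_mono hle
  rw [finrank_range_of_inj hinj, finrank_prod, finrank_self] at this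
  linarith [hmax t]

section

variable {V Q : Type*} [AddCommGroup V] [Module K V] [AddCommGroup Q] [Module K Q]
  {f : V →ₗ[K] Q} {W : Submodule K V}

theorem Submodule.finrank_map_of_disjoint_ker (hW : Disjoint W (ker f)) :
    finrank K (W.map f) = finrank K W := by
  rw [← range_domRestrict]
  refine finrank_range_of_inj (ker_eq_bot.1 ?_)
  rwa [ker_domRestrict, ← disjoint_iff_comap_eq_bot]

theorem Submodule.isCompl_comap_of_isCompl_map {U : Submodule K Q} (hW : Disjoint W (ker f))
    (hU : IsCompl (W.map f) U) : IsCompl W (U.comap f) := by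
  constructor
  · refine disjoint_def.2 fun x hxW hxU => ?_
    have hfx : f x = 0 := disjoint_def.1 hU.disjoint _ (mem_map_of_mem hxW) hxU
    exact disjoint_def.1 hW x hxW hfx
  · refine codisjoint_iff.2 (eq_top_iff'.2 fun x => ?_)
    obtain ⟨_, ⟨w, hw, rfl⟩, u, hu, hwu⟩ := mem_sup.1 (hU.codisjoint.eq_top ▸ mem_top (x := f x))
    refine mem_sup.2 ⟨w, hw, x - w, ?_, add_sub_cancel w x⟩
    rwa [mem_comap, map_sub, ← hwu, add_sub_cancel_left]

end

variable {L V : Type*} [Field L] [Algebra K L] [AddCommGroup V] [Module L V] [Module K V]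

theorem exists_forall_smul_mem_eq_zero_of_finite [Finite K] [FiniteDimensional K L]
    [FiniteDimensional K V] (W : Submodule K V)
    (hle : finrank K W + finrank K L ≤ finrank K V) :
    ∃ v : V, ∀ ℓ : L, ℓ • v ∈ W → ℓ = 0 := by
  by_contra! h
  have : Finite L := Module.finite_of_finite K
  have : Finite V := Module.finite_of_finite K
  have hsurj : Function.Surjective fun p : Lˣ × W => (p.1 : L)⁻¹ • (p.2 : V) := fun v => by
    obtain ⟨ℓ, hℓW, hℓ⟩ := h v
    exact ⟨(Units.mk0 ℓ hℓ, ⟨_, hℓW⟩), inv_smul_smul₀ hℓ v⟩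
  have hcard := Nat.card_le_card_of_surjective _ hsurj
  have hLW : Nat.card L * Nat.card W ≤ Nat.card V := by
    rw [natCard_eq_pow_finrank (K := K) (V := L), natCard_eq_pow_finrank (K := K) (V := W),
      natCard_eq_pow_finrank (K := K) (V := V), ← pow_add]
    exact Nat.pow_le_pow_right Nat.card_pos (by omega)
  rw [Nat.card_prod] at hcard
  rw [Nat.card_eq_card_units_add_one L] at hLW
  nlinarith [Nat.card_pos (α := W)]

theorem exists_forall_smul_mem_eq_zero_of_infinite [Infinite K] [FiniteDimensional K L]
    [FiniteDimensional K V] [IsScalarTower K L V] (W : Submodule K V)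
    (hle : finrank K W + finrank K L ≤ finrank K V) :
    ∃ v : V, ∀ ℓ : L, ℓ • v ∈ W → ℓ = 0 := by
  let φ (v : V) : L →ₗ[K] V ⧸ W := W.mkQ ∘ₗ (toSpanSingleton L V v).restrictScalars K
  have hφ (v : V) (ℓ : L) : φ v ℓ = W.mkQ (ℓ • v) := rfl
  have hφ_add (v w : V) (t : K) : φ (v + t • w) = φ v + t • φ w := by
    ext ℓ
    simp [hφ, smul_comm ℓ t]
  have hbdd : BddAbove (Set.range fun v => finrank K (range (φ v))) :=
    ⟨finrank K L, by rintro _ ⟨v, rfl⟩; exact finrank_range_le _⟩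
  obtain ⟨v₀, hv₀⟩ := Nat.sSup_mem (Set.range_nonempty _) hbdd
  have hmax (v : V) : finrank K (range (φ v)) ≤ finrank K (range (φ v₀)) :=
    (le_csSup hbdd ⟨v, rfl⟩).trans_eq hv₀.symm
  refine ⟨v₀, fun x hx => by_contra fun hx0 => ?_⟩
  have hker : φ v₀ x = 0 := (Submodule.Quotient.mk_eq_zero W).2 hx
  have hrange : range (φ v₀) = ⊤ := by
    refine eq_top_iff'.2 fun q => ?_
    obtain ⟨u, rfl⟩ := W.mkQ_surjective q
    have := (φ v₀).mem_range_of_finrank_range_add_smul_le (φ (x⁻¹ • u))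
      (fun t => hφ_add v₀ _ t ▸ hmax _) hker
    rwa [hφ, smul_smul, mul_inv_cancel₀ hx0, one_smul] at this
  have hnullity : 0 < finrank K (ker (φ v₀)) :=
    Submodule.one_le_finrank_iff.2 ((Submodule.ne_bot_iff _).2 ⟨x, hker, hx0⟩)
  have := (φ v₀).finrank_range_add_finrank_ker
  have := W.finrank_quotient_add_finrank
  rw [hrange, finrank_top] at *
  omega

theorem exists_forall_smul_mem_eq_zero [FiniteDimensional K L] [FiniteDimensional K V]
    [IsScalarTower K L V] (W : Submodule K V)
    (hle : finrank K W + finrank K L ≤ finrank K V) :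
    ∃ v : V, ∀ ℓ : L, ℓ • v ∈ W → ℓ = 0 := by
  cases finite_or_infinite K
  · exact exists_forall_smul_mem_eq_zero_of_finite W hle
  · exact exists_forall_smul_mem_eq_zero_of_infinite W hle

theorem exists_isCompl_restrictScalars [FiniteDimensional K L] [FiniteDimensional L V]
    [IsScalarTower K L V] (W : Submodule K V) (hW : finrank K L ∣ finrank K W) :
    ∃ W' : Submodule L V, IsCompl W (W'.restrictScalars K) := by
  induction hn : finrank L V using Nat.strong_induction_on generalizing V with
  | _ n ih =>
    have : FiniteDimensional K V := Module.Finite.trans L V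
    by_cases hWtop : W = ⊤
    · exact ⟨⊥, by rw [hWtop, restrictScalars_bot]; exact isCompl_top_bot⟩
    have hle : finrank K W + finrank K L ≤ finrank K V := by
      have hlt := Submodule.finrank_lt hWtop
      have hV : finrank K L ∣ finrank K V := ⟨_, (finrank_mul_finrank K L V).symm⟩
      have := Nat.le_of_dvd (by omega) (Nat.dvd_sub hV hW)
      omega
    obtain ⟨v, hv⟩ := exists_forall_smul_mem_eq_zero (L := L) W hle
    have hv0 : v ≠ 0 := fun h => one_ne_zero (hv 1 (by simp [h]))
    let P := L ∙ v
    let f : V →ₗ[K] V ⧸ P := P.mkQ.restrictScalars K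
    have hdisj : Disjoint W (ker f) := disjoint_def.2 fun x hxW hxP => by
      obtain ⟨ℓ, rfl⟩ := mem_span_singleton.1 ((Quotient.mk_eq_zero P).1 hxP)
      rw [hv ℓ hxW, zero_smul]
    have hdim : finrank L (V ⧸ P) < n := by
      have := P.finrank_quotient_add_finrank
      rw [finrank_span_singleton hv0] at this
      omega
    obtain ⟨U, hU⟩ :=
      ih _ hdim (W.map f) (by rwa [finrank_map_of_disjoint_ker hdisj]) rfl
    exact ⟨U.comap P.mkQ, isCompl_comap_of_isCompl_map hdisj hU⟩

end

theorem stmt10 {d : ℕ} (K L : Type*) [Field K] [Field L] [Algebra K L]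
    [FiniteDimensional K L] (hd : Module.finrank K L = d)
    (V : Type*) [AddCommGroup V] [Module L V] [FiniteDimensional L V]
    [Module K V] [IsScalarTower K L V]
    (W : Submodule K V) (hW : d ∣ Module.finrank K W) :
    ∃ W' : Submodule L V, IsCompl W (W'.restrictScalars K) := by
  subst hd
  exact exists_isCompl_restrictScalars W hW
end

section
/- Let M be a linear subspace of Mat_{m,n}(K) with urk(M) < n and card(K) > urk(M). Then there exists a nonzero vector x ∈ K^n such that dim(Mx) ≤ urk(M), where Mx := {Mx : M ∈ M}. -/
/-!
Let `A ∈ M` have maximal rank `r` and let `x ≠ 0` lie in its kernel (it exists since `r < n`).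
We show `B x ∈ im A` for every `B ∈ M`, so that `Mx ⊆ im A` has dimension at most `r`.
If `B x ∉ im A`, pick `y₁, …, y_r` with `A yᵢ` a basis of `im A` and a projection `P` onto
`K^{r+1}` sending `B x, A y₁, …, A y_r` to the standard basis. With `z = (x, y₁, …, y_r)`,
the polynomial `p(t) = det (P (A + t B) zⱼ)ⱼ` vanishes on `K` because every matrix of the
pencil has rank `≤ r`, and its coefficient of `t^{r+1}` is `det (P B zⱼ)ⱼ = 0` because `B` has rank
`≤ r`; as `card K > r`, `p = 0`. But `A x = 0` makes `t` divide the first column, and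
`p(t) / t` takes the value `det 1 = 1` at `t = 0`.
-/

open Module Polynomial Matrix

section

variable {K : Type*} [Field K] {ι m n : Type*} [Fintype ι] [DecidableEq ι] [Fintype n]

theorem Matrix.exists_mulVec_eq_zero_of_rank_lt (A : Matrix m n K)
    (h : A.rank < Fintype.card n) : ∃ x ≠ 0, A *ᵥ x = 0 := by
  have hker : LinearMap.ker A.mulVecLin.rangeRestrict ≠ ⊥ :=
    LinearMap.ker_ne_bot_of_finrank_lt (by simpa [Matrix.rank] using h)
  obtain ⟨x, hx, hx0⟩ := Submodule.exists_mem_ne_zero_of_ne_bot hker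
  rw [LinearMap.ker_rangeRestrict, LinearMap.mem_ker, mulVecLin_apply] at hx
  exact ⟨x, hx0, hx⟩

theorem Matrix.exists_linearIndependent_cons_mulVec {A : Matrix m n K} {w : m → K}
    (hw : w ∉ LinearMap.range A.mulVecLin) :
    ∃ y : Fin A.rank → n → K, LinearIndependent K (Fin.cons w fun i => A *ᵥ y i) := by
  let b : Basis (Fin A.rank) K (LinearMap.range A.mulVecLin) := finBasisOfFinrankEq K _ rfl
  choose y hy using fun i => (b i).2
  have hb : LinearIndependent K ((LinearMap.range A.mulVecLin).subtype ∘ b) :=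
    b.linearIndependent.map' _ (Submodule.ker_subtype _)
  have hspan : Submodule.span K (Set.range ((LinearMap.range A.mulVecLin).subtype ∘ b)) =
      LinearMap.range A.mulVecLin := by
    rw [Set.range_comp, Submodule.span_image, b.span_eq, Submodule.map_subtype_top]
  rw [← hspan] at hw
  have hAy : (fun i => A *ᵥ y i) = (LinearMap.range A.mulVecLin).subtype ∘ b := funext hy
  exact ⟨y, hAy ▸ linearIndependent_finCons.2 ⟨hb, hw⟩⟩

theorem LinearIndependent.exists_linearMap_apply_eq_single {V : Type*} [AddCommGroup V]
    [Module K V] {v : ι → V} (hv : LinearIndependent K v) :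
    ∃ P : V →ₗ[K] ι → K, ∀ j, P (v j) = Pi.single j 1 := by
  obtain ⟨P, hP⟩ := (Fintype.linearCombination K v).exists_leftInverse_of_injective
    (LinearMap.ker_eq_bot.2 (linearIndependent_iff_injective_fintypeLinearCombination.1 hv))
  exact ⟨P, fun j => by simpa using LinearMap.congr_fun hP (Pi.single j 1)⟩

theorem Matrix.det_of_linearMap_mulVec_eq_zero [Fintype m] (P : (m → K) →ₗ[K] ι → K)
    (A : Matrix m n K) (z : ι → n → K) (hA : A.rank < Fintype.card ι) :
    (of fun i j => P (A *ᵥ z j) i).det = 0 := by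
  classical
  have hmul : (of fun i j => P (A *ᵥ z j) i) = P.toMatrix' * A * of fun k j => z j k := by
    ext i j
    rw [of_apply, ← LinearMap.toMatrix'_mulVec, mulVec_mulVec]
    rfl
  by_contra hdet
  refine (rank_of_det_ne_zero hdet).not_lt ?_
  rw [hmul]
  exact (rank_mul_le_left _ _).trans_lt ((rank_mul_le_right _ _).trans_lt hA)

theorem Matrix.eval_det_X_smul_add_C (N₀ N₁ : Matrix ι ι K) (t : K) :
    ((X : K[X]) • N₁.map C + N₀.map C).det.eval t = (N₀ + t • N₁).det := by
  rw [← coe_evalRingHom, RingHom.map_det]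
  congr 1
  ext i k
  simp only [RingHom.mapMatrix_apply, Matrix.map_apply, Matrix.add_apply, Matrix.smul_apply,
    smul_eq_mul, coe_evalRingHom, eval_add, eval_mul, eval_X, eval_C]
  ring

/-- When column `j` of `N₀` is zero, `det (N₀.updateCol j (N₁ · j))` is the coefficient of `t` in
`det (N₀ + t • N₁)`. -/
theorem Matrix.det_updateCol_eq_zero_of_det_add_smul_eq_zero
    (hK : (Fintype.card ι : Cardinal) ≤ Cardinal.mk K) {N₀ N₁ : Matrix ι ι K} {j : ι}
    (hpencil : ∀ t : K, (N₀ + t • N₁).det = 0) (hN₁ : N₁.det = 0) (hcol : ∀ i, N₀ i j = 0) :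
    (N₀.updateCol j fun i => N₁ i j).det = 0 := by
  set N : Matrix ι ι K[X] := (X : K[X]) • N₁.map C + N₀.map C
  have hdet : N.det = 0 := by
    by_contra hne
    have hdeg : N.det.natDegree < Fintype.card ι := by
      refine (natDegree_det_X_add_C_le N₁ N₀).lt_of_ne fun h => hne ?_
      rw [← leadingCoeff_eq_zero, leadingCoeff, h, coeff_det_X_add_C_card, hN₁]
    refine hne (eq_zero_of_forall_eval_zero_of_natDegree_lt_card _ (fun t => ?_) ?_)
    · rw [eval_det_X_smul_add_C, hpencil]
    · exact (Nat.cast_lt.2 hdeg).trans_le hK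
  have hfactor : N = N.updateCol j ((X : K[X]) • fun i => C (N₁ i j)) := by
    ext i k
    rcases eq_or_ne k j with rfl | hk
    · simp [N, hcol]
    · simp [N, updateCol_ne hk]
  have hq : (N.updateCol j fun i => C (N₁ i j)).det = 0 := by
    rwa [hfactor, det_updateCol_smul, mul_eq_zero, or_iff_right X_ne_zero] at hdet
  have := congrArg (eval 0) hq
  rw [← coe_evalRingHom, RingHom.map_det, map_zero] at this
  convert this using 2
  ext i k
  rcases eq_or_ne k j with rfl | hk
  · simp
  · simp [N, updateCol_ne hk]

theorem Matrix.mulVec_mem_range_of_rank_add_smul_le [Fintype m] {A B : Matrix m n K}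
    (hK : (A.rank : Cardinal) < Cardinal.mk K) (hpencil : ∀ t : K, (A + t • B).rank ≤ A.rank)
    (hB : B.rank ≤ A.rank) {x : n → K} (hx : A *ᵥ x = 0) :
    B *ᵥ x ∈ LinearMap.range A.mulVecLin := by
  by_contra hBx
  set r := A.rank
  obtain ⟨y, hy⟩ := exists_linearIndependent_cons_mulVec hBx
  obtain ⟨P, hP⟩ := hy.exists_linearMap_apply_eq_single
  let z : Fin (r + 1) → n → K := Fin.cons x y
  have hcard : (Fintype.card (Fin (r + 1)) : Cardinal) ≤ Cardinal.mk K := by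
    simpa using Cardinal.add_one_le_of_lt hK
  have hrank : r < Fintype.card (Fin (r + 1)) := by simp
  have key := det_updateCol_eq_zero_of_det_add_smul_eq_zero hcard (j := 0)
    (N₀ := of fun i j => P (A *ᵥ z j) i) (N₁ := of fun i j => P (B *ᵥ z j) i)
    (fun t => by
      convert det_of_linearMap_mulVec_eq_zero P (A + t • B) z ((hpencil t).trans_lt hrank) using 2
      ext i j
      simp [add_mulVec, smul_mulVec])
    (det_of_linearMap_mulVec_eq_zero P B z (hB.trans_lt hrank)) (by simp [z, hx])
  have hid : ((of fun i j => P (A *ᵥ z j) i).updateCol 0 fun i => P (B *ᵥ z 0) i) = 1 := by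
    ext i j
    refine Fin.cases ?_ (fun k => ?_) j
    · simpa [z, one_apply, Pi.single_apply] using congrFun (hP 0) i
    · simpa [z, one_apply, Pi.single_apply] using congrFun (hP k.succ) i
  simp only [of_apply] at key
  rw [hid, det_one] at key
  exact one_ne_zero key

end

theorem stmt13 {K : Type*} [Field K] {m n : ℕ}
    (M : Submodule K (Matrix (Fin m) (Fin n) K)) (r : ℕ)
    (hub : ∀ A ∈ M, A.rank ≤ r) (hmax : ∃ A ∈ M, A.rank = r)
    (hrn : r < n) (hK : (r : Cardinal) < Cardinal.mk K) :
    ∃ x : Fin n → K, x ≠ 0 ∧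
      Module.finrank K
        ↥(Submodule.span K ((fun A : Matrix (Fin m) (Fin n) K => A.mulVec x) '' M))
        ≤ r := by
  obtain ⟨A, hAM, rfl⟩ := hmax
  obtain ⟨x, hx0, hAx⟩ := A.exists_mulVec_eq_zero_of_rank_lt (by simpa using hrn)
  refine ⟨x, hx0, (Submodule.finrank_mono ?_).trans_eq rfl⟩
  rw [Submodule.span_le]
  rintro _ ⟨B, hBM, rfl⟩
  exact mulVec_mem_range_of_rank_add_smul_le hK
    (fun t => hub _ (M.add_mem hAM (M.smul_mem t hBM))) (hub B hBM) hAx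
end

section
/- Let (A, ⋆, •) be an LDB division algebra over K. Then there exists a unique quadratic form q on A such that x ⋆ (x • y) = q(x)·y for all x, y ∈ A, and this quadratic form q is non-isotropic (q(x) ≠ 0 for every nonzero x). -/
/-!
For fixed `x`, the endomorphism `y ↦ x ⋆ (x • y)` maps every vector to a multiple of itself, so it
is a homothety `q(x) • id`. Reading `q` off at a fixed `y₀ ≠ 0` exhibits it as a linear functional
applied to the `A`-valued quadratic map `x ↦ x ⋆ (x • y₀)`, so `q` is a quadratic form. It is unique
because `y₀ ≠ 0`, and non-isotropic because neither `⋆` nor `•` has zero divisors.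
-/

namespace LinearMap

variable {R V : Type*} [CommRing R] [IsDomain R] [AddCommGroup V] [Module R V] [Module.Free R V]

theorem exists_eq_smul_id_of_forall_exists_apply_eq_smul {f : V →ₗ[R] V}
    (h : ∀ v, ∃ c : R, f v = c • v) : ∃ a : R, f = a • 1 := by
  refine exists_eq_smul_id_of_forall_notLinearIndependent fun v hv => ?_
  obtain ⟨c, hc⟩ := h v
  have := LinearIndependent.pair_iff.mp hv c (-1) (by rw [hc, neg_one_smul, add_neg_cancel])
  exact neg_ne_zero.mpr one_ne_zero this.2

end LinearMap

section LeftDivision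

variable {K A : Type*} [Field K] [AddCommGroup A] [Module K A] [Nontrivial A]
  {opStar opBullet : A →ₗ[K] A →ₗ[K] A}

theorem exists_quadraticForm_star_bullet_eq_smul
    (hcol : ∀ x y : A, ∃ c : K, opStar x (opBullet x y) = c • y) :
    ∃ q : QuadraticForm K A, ∀ x y, opStar x (opBullet x y) = q x • y := by
  obtain ⟨y₀, hy₀⟩ := exists_ne (0 : A)
  obtain ⟨ℓ, hℓ⟩ : ∃ ℓ : A →ₗ[K] K, ℓ ∘ₗ LinearMap.toSpanSingleton K A y₀ = LinearMap.id :=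
    LinearMap.exists_leftInverse_of_injective _ (LinearMap.ker_toSpanSingleton K hy₀)
  let q : QuadraticForm K A :=
    ℓ.compQuadraticMap (LinearMap.BilinMap.toQuadraticMap (opStar.compl₂ (opBullet.flip y₀)))
  refine ⟨q, fun x y => ?_⟩
  obtain ⟨a, ha⟩ :=
    (opStar x ∘ₗ opBullet x).exists_eq_smul_id_of_forall_exists_apply_eq_smul (hcol x)
  have hstar : ∀ y, opStar x (opBullet x y) = a • y := fun y => by simpa using congr($ha y)
  have hqa : q x = a := by
    simpa [q, hstar] using congr($hℓ a)
  rw [hstar, hqa]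

theorem QuadraticForm.eq_of_forall_star_bullet_eq_smul {q q' : QuadraticForm K A}
    (hq : ∀ x y, opStar x (opBullet x y) = q x • y)
    (hq' : ∀ x y, opStar x (opBullet x y) = q' x • y) : q = q' := by
  obtain ⟨y₀, hy₀⟩ := exists_ne (0 : A)
  ext x
  exact smul_left_injective K hy₀ ((hq x y₀).symm.trans (hq' x y₀))

theorem QuadraticForm.apply_ne_zero_of_forall_star_bullet_eq_smul {q : QuadraticForm K A}
    (hStar : ∀ a b : A, a ≠ 0 → b ≠ 0 → opStar a b ≠ 0)
    (hBullet : ∀ a b : A, a ≠ 0 → b ≠ 0 → opBullet a b ≠ 0)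
    (hq : ∀ x y, opStar x (opBullet x y) = q x • y) {x : A} (hx : x ≠ 0) : q x ≠ 0 := by
  obtain ⟨y₀, hy₀⟩ := exists_ne (0 : A)
  intro hqx
  apply hStar x _ hx (hBullet x y₀ hx hy₀)
  rw [hq, hqx, zero_smul]

end LeftDivision

theorem stmt17_general {K : Type*} [Field K] (A : Type*) [AddCommGroup A] [Module K A]
    (hA : 0 < Module.finrank K A)
    (opStar opBullet : A →ₗ[K] A →ₗ[K] A)
    (hreg : ∀ a b : A, a ≠ 0 → b ≠ 0 → opStar a b ≠ 0)
    (hbz : ∀ a b : A, opBullet a b = 0 ↔ a = 0 ∨ b = 0)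
    (hcol : ∀ x y : A, ∃ c : K, opStar x (opBullet x y) = c • y) :
    (∃! q : QuadraticForm K A, ∀ x y : A, opStar x (opBullet x y) = q x • y) ∧
    ∀ q : QuadraticForm K A, (∀ x y : A, opStar x (opBullet x y) = q x • y) →
      ∀ x : A, x ≠ 0 → q x ≠ 0 := by
  have : Nontrivial A := Module.nontrivial_of_finrank_pos hA
  have hBullet : ∀ a b : A, a ≠ 0 → b ≠ 0 → opBullet a b ≠ 0 := fun a b ha hb h =>
    ((hbz a b).mp h).elim ha hb
  obtain ⟨q, hq⟩ := exists_quadraticForm_star_bullet_eq_smul hcol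
  exact ⟨⟨q, hq, fun q' hq' => QuadraticForm.eq_of_forall_star_bullet_eq_smul hq' hq⟩,
    fun q hq x hx => QuadraticForm.apply_ne_zero_of_forall_star_bullet_eq_smul hreg hBullet hq hx⟩

theorem stmt17 {K : Type*} [Field K] (A : Type*) [AddCommGroup A] [Module K A]
    [FiniteDimensional K A] (hA : 0 < Module.finrank K A)
    (opStar opBullet : A →ₗ[K] A →ₗ[K] A)
    (hreg : ∀ a b : A, a ≠ 0 → b ≠ 0 → opStar a b ≠ 0)
    (hbz : ∀ a b : A, opBullet a b = 0 ↔ a = 0 ∨ b = 0)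
    (hcol : ∀ x y : A, ∃ c : K, opStar x (opBullet x y) = c • y) :
    (∃! q : QuadraticForm K A, ∀ x y : A, opStar x (opBullet x y) = q x • y) ∧
    ∀ q : QuadraticForm K A, (∀ x y : A, opStar x (opBullet x y) = q x • y) →
      ∀ x : A, x ≠ 0 → q x ≠ 0 :=
  stmt17_general A hA opStar opBullet hreg hbz hcol
end

section
/- Let (A, ⋆) be a finite-dimensional division algebra and let ∘ and • be two bilinear quasi-left-inversions of ⋆. Then • = λ∘ for some scalar λ ∈ K. -/
/-!
For `x ≠ 0` the map `opStar x` is injective and sends both `opCirc x y` and `opBullet x y` to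
multiples of `y`, so `opBullet x y` is a multiple of `opCirc x y`. A linear map that is pointwise
proportional to an injective one is a scalar multiple of it. Applied to `opBullet x` and
`opCirc x` this gives a scalar for each `x`; applied to the flipped maps at a fixed `y₀ ≠ 0` it
gives one scalar for all `x`, and the two agree because `opCirc x y₀ ≠ 0`.
-/

open Function

namespace LinearMap

variable {K V V' W : Type*} [Field K] [AddCommGroup V] [Module K V] [AddCommGroup V']
  [Module K V'] [AddCommGroup W] [Module K W]

theorem exists_smul_eq_of_injective {s : V →ₗ[K] W} (hs : Injective s) {u v : V} {w : W}
    {a b : K} (hu : s u = a • w) (hv : s v = b • w) (hu0 : u ≠ 0) : ∃ c : K, v = c • u := by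
  have ha : a ≠ 0 := by
    rintro rfl
    exact hu0 (hs (by rw [hu, zero_smul, map_zero]))
  exact ⟨b / a, hs (by rw [map_smul, hu, hv, smul_smul, div_mul_cancel₀ _ ha])⟩

theorem exists_eq_smul_of_forall_exists_smul {f g : V →ₗ[K] W} (hg : Injective g)
    (h : ∀ y, ∃ c : K, f y = c • g y) : ∃ c : K, f = c • g := by
  rcases subsingleton_or_nontrivial V with hV | _
  · exact ⟨0, ext fun y => by rw [Subsingleton.elim y 0, map_zero, map_zero]⟩
  obtain ⟨y₀, hy₀⟩ := exists_ne (0 : V)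
  obtain ⟨c, hc⟩ := h y₀
  refine ⟨c, ext fun y => ?_⟩
  by_cases hy : y ∈ K ∙ y₀
  · obtain ⟨a, rfl⟩ := Submodule.mem_span_singleton.1 hy
    rw [map_smul, hc, smul_apply, map_smul, smul_comm]
  have hind : LinearIndependent K ![g y₀, g y] := by
    refine (LinearIndependent.pair_iff' ((map_ne_zero_iff g hg).2 hy₀)).2 fun a hya => hy ?_
    exact Submodule.mem_span_singleton.2 ⟨a, hg (by rw [map_smul, hya])⟩
  -- Compare the coefficients of `f y`, `f y₀` and `f (y + y₀)` in the independent pair.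
  obtain ⟨d, hd⟩ := h y
  obtain ⟨d', hd'⟩ := h (y + y₀)
  have hcomb : (c - d') • g y₀ + (d - d') • g y = 0 := by
    rw [sub_smul, sub_smul, ← hd, ← hc, ← sub_eq_zero.2 hd']
    simp only [map_add, smul_add]
    abel
  obtain ⟨hcd', hdd'⟩ := LinearIndependent.pair_iff.1 hind _ _ hcomb
  rw [hd, smul_apply, sub_eq_zero.1 hdd', sub_eq_zero.1 hcd']

theorem exists_eq_smul_of_forall_exists_smul₂ {B C : V →ₗ[K] V' →ₗ[K] W}
    (hC : ∀ x y, C x y = 0 → x = 0 ∨ y = 0) (h : ∀ x y, ∃ c : K, B x y = c • C x y) :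
    ∃ c : K, B = c • C := by
  rcases subsingleton_or_nontrivial V' with hV' | _
  · exact ⟨0, ext₂ fun x y => by rw [Subsingleton.elim y 0, map_zero, map_zero]⟩
  obtain ⟨y₀, hy₀⟩ := exists_ne (0 : V')
  have hCy₀ : Injective (C.flip y₀) :=
    (injective_iff_map_eq_zero _).2 fun x hx => (hC x y₀ hx).resolve_right hy₀
  obtain ⟨c, hc⟩ := exists_eq_smul_of_forall_exists_smul (f := B.flip y₀) hCy₀ fun x => h x y₀
  refine ⟨c, ext fun x => ?_⟩
  by_cases hx : x = 0
  · rw [hx, map_zero, map_zero]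
  have hCx : Injective (C x) :=
    (injective_iff_map_eq_zero _).2 fun y hy => (hC x y hy).resolve_left hx
  obtain ⟨d, hd⟩ := exists_eq_smul_of_forall_exists_smul hCx (h x)
  have hdc : d • C x y₀ = c • C x y₀ :=
    calc d • C x y₀ = B x y₀ := by rw [hd, smul_apply]
      _ = c • C x y₀ := congr($hc x)
  have hCxy₀ : C x y₀ ≠ 0 := fun h0 => (hC x y₀ h0).elim hx hy₀
  rw [hd, smul_left_injective K hCxy₀ hdc, smul_apply]

end LinearMap

theorem stmt18_general {K : Type*} [Field K] (A : Type*) [AddCommGroup A] [Module K A]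
    (opStar opCirc opBullet : A →ₗ[K] A →ₗ[K] A)
    (hreg : ∀ a b : A, a ≠ 0 → b ≠ 0 → opStar a b ≠ 0)
    (hcz : ∀ a b : A, opCirc a b = 0 ↔ a = 0 ∨ b = 0)
    (hccol : ∀ x y : A, ∃ c : K, opStar x (opCirc x y) = c • y)
    (hbcol : ∀ x y : A, ∃ c : K, opStar x (opBullet x y) = c • y) :
    ∃ lam : K, ∀ x y : A, opBullet x y = lam • opCirc x y := by
  have hStar : ∀ x, x ≠ 0 → Injective (opStar x) := fun x hx =>
    (injective_iff_map_eq_zero _).2 fun y hy => by_contra fun hy0 => hreg x y hx hy0 hy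
  have hprop : ∀ x y, ∃ c : K, opBullet x y = c • opCirc x y := by
    intro x y
    by_cases h0 : opCirc x y = 0
    · rcases (hcz x y).1 h0 with rfl | rfl <;> exact ⟨0, by simp⟩
    have hx : x ≠ 0 := fun hx => h0 ((hcz x y).2 (Or.inl hx))
    obtain ⟨a, ha⟩ := hccol x y
    obtain ⟨b, hb⟩ := hbcol x y
    exact LinearMap.exists_smul_eq_of_injective (hStar x hx) ha hb h0
  obtain ⟨lam, hlam⟩ :=
    LinearMap.exists_eq_smul_of_forall_exists_smul₂ (fun x y => (hcz x y).1) hprop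
  exact ⟨lam, fun x y => by rw [hlam, LinearMap.smul_apply, LinearMap.smul_apply]⟩

theorem stmt18 {K : Type*} [Field K] (A : Type*) [AddCommGroup A] [Module K A]
    [FiniteDimensional K A]
    (opStar opCirc opBullet : A →ₗ[K] A →ₗ[K] A)
    (hreg : ∀ a b : A, a ≠ 0 → b ≠ 0 → opStar a b ≠ 0)
    (hcz : ∀ a b : A, opCirc a b = 0 ↔ a = 0 ∨ b = 0)
    (hccol : ∀ x y : A, ∃ c : K, opStar x (opCirc x y) = c • y)
    (hbz : ∀ a b : A, opBullet a b = 0 ↔ a = 0 ∨ b = 0)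
    (hbcol : ∀ x y : A, ∃ c : K, opStar x (opBullet x y) = c • y) :
    ∃ lam : K, ∀ x y : A, opBullet x y = lam • opCirc x y :=
  stmt18_general A opStar opCirc opBullet hreg hcz hccol hbcol
end
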